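/- arXiv:1707.09748 — 3 statements merged into one kernel-verified Lean document; each statement's English description precedes it below -/
import Mathlib

section
/- For every n ≥ 1, the function φ_n^α·B̌_n^β belongs to L_n and satisfies ⟨φ_n^α·B̌_n^β, ζ̌_n^β·g⟩ = 0 for every g ∈ L_{n−1}; similarly, φ_n^β·B̌_n^α belongs to L_n and satisfies ⟨φ_n^β·B̌_n^α, ζ̌_n^α·g⟩ = 0 for every g ∈ L_{n−1}. -/
noncomputable section
open MeasureTheory
open scoped Classical

namespace ORF

/-- complex conjugation -/
def conj' (z : ℂ) : ℂ := (starRingEnd ℂ) z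

/-- membership in the unit circle 𝕋 -/
def onT (z : ℂ) : Prop := ‖z‖ = 1

/-- `z` is a (strictly) positive real number -/
def posR (z : ℂ) : Prop := 0 < z.re ∧ z.im = 0

/-- σ_j = conj(α_j)/|α_j| (σ_j = 1 if α_j = 0, i.e. if β_j = ∞) -/
def sig (α : ℕ → ℂ) (j : ℕ) : ℂ :=
  if α j = 0 then 1 else conj' (α j) / ((‖α j‖ : ℝ) : ℂ)

/-- ς_n = ∏_{j=1}^n σ_j -/
def sigProd (α : ℕ → ℂ) (n : ℕ) : ℂ := ∏ j ∈ Finset.Icc 1 n, sig α j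

/-- ϖ_j^α(z) = 1 − conj(α_j)·z, as a polynomial in z -/
def wA (α : ℕ → ℂ) (j : ℕ) : Polynomial ℂ :=
  1 - Polynomial.C (conj' (α j)) * Polynomial.X

/-- ϖ_j^β(z) = 1 − conj(β_j)·z = 1 − z/α_j, and −z when β_j = ∞ (α_j = 0) -/
def wB (α : ℕ → ℂ) (j : ℕ) : Polynomial ℂ :=
  if α j = 0 then -Polynomial.X else 1 - Polynomial.C (α j)⁻¹ * Polynomial.X

/-- ϖ_j = ϖ_j^γ (γ_j = α_j when `c j`, γ_j = β_j otherwise) -/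
def wG (α : ℕ → ℂ) (c : ℕ → Bool) (j : ℕ) : Polynomial ℂ :=
  if c j then wA α j else wB α j

/-- π_n^α -/
def piA (α : ℕ → ℂ) (n : ℕ) : Polynomial ℂ := ∏ j ∈ Finset.Icc 1 n, wA α j
/-- π_n^β -/
def piB (α : ℕ → ℂ) (n : ℕ) : Polynomial ℂ := ∏ j ∈ Finset.Icc 1 n, wB α j
/-- π_n = π_n^γ -/
def piG (α : ℕ → ℂ) (c : ℕ → Bool) (n : ℕ) : Polynomial ℂ := ∏ j ∈ Finset.Icc 1 n, wG α c j

/-- 𝕒_n = {1 ≤ j ≤ n : γ_j = α_j} -/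
def aSet (c : ℕ → Bool) (n : ℕ) : Finset ℕ := (Finset.Icc 1 n).filter (fun j => c j = true)
/-- 𝕓_n = {1 ≤ j ≤ n : γ_j = β_j} -/
def bSet (c : ℕ → Bool) (n : ℕ) : Finset ℕ := (Finset.Icc 1 n).filter (fun j => c j = false)

/-- Blaschke factor ζ_j^α -/
def zetaA (α : ℕ → ℂ) (j : ℕ) (z : ℂ) : ℂ :=
  if α j = 0 then z else sig α j * (z - α j) / (1 - conj' (α j) * z)

/-- Blaschke factor ζ_j^β (β_j = 1/conj(α_j); ζ_j^β(z) = 1/z when β_j = ∞) -/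
def zetaB (α : ℕ → ℂ) (j : ℕ) (z : ℂ) : ℂ :=
  if α j = 0 then z⁻¹ else sig α j * (z - (conj' (α j))⁻¹) / (1 - z / α j)

/-- ζ_j = ζ_j^γ -/
def zetaG (α : ℕ → ℂ) (c : ℕ → Bool) (j : ℕ) (z : ℂ) : ℂ :=
  if c j then zetaA α j z else zetaB α j z

/-- B_n^α -/
def BA (α : ℕ → ℂ) (n : ℕ) (z : ℂ) : ℂ := ∏ j ∈ Finset.Icc 1 n, zetaA α j z
/-- B_n^β -/
def BB (α : ℕ → ℂ) (n : ℕ) (z : ℂ) : ℂ := ∏ j ∈ Finset.Icc 1 n, zetaB α j z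
/-- B̌_n^α = ∏_{j ∈ 𝕒_n} ζ_j -/
def BcA (α : ℕ → ℂ) (c : ℕ → Bool) (n : ℕ) (z : ℂ) : ℂ := ∏ j ∈ aSet c n, zetaG α c j z
/-- B̌_n^β = ∏_{j ∈ 𝕓_n} ζ_j -/
def BcB (α : ℕ → ℂ) (c : ℕ → Bool) (n : ℕ) (z : ℂ) : ℂ := ∏ j ∈ bSet c n, zetaG α c j z

/-- ζ̌_n^α (= ζ_n if γ_n = α_n, = 1 otherwise) -/
def zcA (α : ℕ → ℂ) (c : ℕ → Bool) (n : ℕ) (z : ℂ) : ℂ :=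
  if c n then zetaG α c n z else 1
/-- ζ̌_n^β (= ζ_n if γ_n = β_n, = 1 otherwise) -/
def zcB (α : ℕ → ℂ) (c : ℕ → Bool) (n : ℕ) (z : ℂ) : ℂ :=
  if c n then 1 else zetaG α c n z

/-- The space L_n^ν = {p/π_n^ν : deg p ≤ n}; a function `f` belongs to it if it agrees
with such a rational function on the unit circle (where all these objects live). -/
def Lsp (pip : ℕ → Polynomial ℂ) (n : ℕ) : Set (ℂ → ℂ) :=
  {f | ∃ p : Polynomial ℂ, p.natDegree ≤ n ∧ ∀ z, onT z → f z = p.eval z / (pip n).eval z}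

/-- L_{n*}^ν = {f_* : f ∈ L_n^ν} (again as functions on the unit circle, where
f_*(z) = conj(f(1/conj z)) = conj(f(z))) -/
def LstarSp (pip : ℕ → Polynomial ℂ) (n : ℕ) : Set (ℂ → ℂ) :=
  {f | ∃ p : Polynomial ℂ, p.natDegree ≤ n ∧ ∀ z, onT z → f z = conj' (p.eval z / (pip n).eval z)}

/-- R_n^ν = L_n^ν · L_{n*}^ν -/
def Rset (pip : ℕ → Polynomial ℂ) (n : ℕ) : Set (ℂ → ℂ) :=
  {h | ∃ g ∈ Lsp pip n, ∃ k ∈ LstarSp pip n, ∀ z, onT z → h z = g z * k z}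

/-- the substar conjugate f_*(z) = conj(f(1/conj z)) -/
def substar (f : ℂ → ℂ) : ℂ → ℂ := fun z => conj' (f ((conj' z)⁻¹))

/-- superstar conjugate q^*(z) = z^n conj(q(1/conj z)) of a polynomial of degree ≤ n -/
def pstar (n : ℕ) (q : Polynomial ℂ) : Polynomial ℂ :=
  ∑ k ∈ Finset.range (n + 1), Polynomial.C (conj' (q.coeff k)) * Polynomial.X ^ (n - k)

/-- the inner product ⟨f,g⟩ = ∫ conj(f) g dμ -/
def inn (μ : Measure ℂ) (f g : ℂ → ℂ) : ℂ := ∫ z, conj' (f z) * g z ∂μ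

/-- the reciprocal ORF φ_n^{ν*} = B_n^ν (φ_n^ν)_* (resp. φ_n^* = B̌_n^α B̌_n^β (φ_n)_*),
written out as the rational function ς_n p_n^{ν*}/π_n^ν -/
def starF (α : ℕ → ℂ) (pip : ℕ → Polynomial ℂ) (p : ℕ → Polynomial ℂ) (n : ℕ) (z : ℂ) : ℂ :=
  sigProd α n * (pstar n (p n)).eval z / (pip n).eval z

/-- `μ` is a probability measure on the unit circle 𝕋, positive a.e. on 𝕋 -/
structure CircleMeasure (μ : Measure ℂ) : Prop where
  prob : IsProbabilityMeasure μ
  circ : μ {z | ¬ onT z} = 0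
  pos : ∀ U : Set ℂ, IsOpen U → (U ∩ {z | onT z}).Nonempty → 0 < μ U

/-- `φ` (with numerators `p`) is the sequence of orthonormal rational functions for the
nested spaces `Lsp pip`: φ_0 = 1, φ_n = p_n/π_n ∈ L_n \ L_{n-1}, φ_n ⊥ L_{n-1}, ‖φ_n‖ = 1. -/
structure IsORF (μ : Measure ℂ) (pip : ℕ → Polynomial ℂ) (φ : ℕ → ℂ → ℂ)
    (p : ℕ → Polynomial ℂ) : Prop where
  rep : ∀ n z, φ n z = (p n).eval z / (pip n).eval z
  deg : ∀ n, (p n).natDegree ≤ n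
  p0 : p 0 = 1
  notmem : ∀ n, 1 ≤ n → φ n ∉ Lsp pip (n - 1)
  orth : ∀ n, 1 ≤ n → ∀ f ∈ Lsp pip (n - 1), inn μ (φ n) f = 0
  norm : ∀ n, inn μ (φ n) (φ n) = 1

/-- normalization φ_n^{α*}(α_n) > 0 -/
def normA (α : ℕ → ℂ) (p : ℕ → Polynomial ℂ) (n : ℕ) : Prop :=
  posR (sigProd α n * (pstar n (p n)).eval (α n) / (piA α n).eval (α n))

/-- normalization φ_n^{β*}(β_n) > 0 (when β_n = ∞ the value is the limit,
i.e. the ratio of the coefficients of z^n) -/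
def normB (α : ℕ → ℂ) (p : ℕ → Polynomial ℂ) (n : ℕ) : Prop :=
  if α n = 0 then posR (sigProd α n * (pstar n (p n)).coeff n / (piB α n).coeff n)
  else posR (sigProd α n * (pstar n (p n)).eval ((conj' (α n))⁻¹) /
    (piB α n).eval ((conj' (α n))⁻¹))

/-- π̌_n^α = ∏_{j∈𝕒_n} ϖ_j -/
def pidA (α : ℕ → ℂ) (c : ℕ → Bool) (n : ℕ) : Polynomial ℂ := ∏ j ∈ aSet c n, wA α j
/-- π̌_n^β = ∏_{j∈𝕓_n} ϖ_j -/
def pidB (α : ℕ → ℂ) (c : ℕ → Bool) (n : ℕ) : Polynomial ℂ := ∏ j ∈ bSet c n, wB α j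
/-- ∏_{j∈𝕓_n}(z − β_j), a factor being −1 when β_j = ∞ -/
def dB (α : ℕ → ℂ) (c : ℕ → Bool) (n : ℕ) : Polynomial ℂ :=
  ∏ j ∈ bSet c n,
    (if α j = 0 then (-1 : Polynomial ℂ) else Polynomial.X - Polynomial.C ((conj' (α j))⁻¹))
/-- ∏_{j∈𝕒_n}(z − α_j) -/
def dA (α : ℕ → ℂ) (c : ℕ → Bool) (n : ℕ) : Polynomial ℂ :=
  ∏ j ∈ aSet c n, (Polynomial.X - Polynomial.C (α j))

/-- ς̌_n^α = ∏_{j∈𝕒_n} σ_j -/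
def sigcA (α : ℕ → ℂ) (c : ℕ → Bool) (n : ℕ) : ℂ := ∏ j ∈ aSet c n, sig α j
/-- ς̌_n^β = ∏_{j∈𝕓_n} σ_j -/
def sigcB (α : ℕ → ℂ) (c : ℕ → Bool) (n : ℕ) : ℂ := ∏ j ∈ bSet c n, sig α j

/-- normalization for the γ-sequence: (φ_n^*/B̌_n^β)(α_n) > 0 when γ_n = α_n and
(φ_n^*/B̌_n^α)(β_n) > 0 when γ_n = β_n, written via the identities
φ_n^*/B̌_n^β = ς̌_n^α p_n^*/(π̌_n^α ∏_{j∈𝕓_n}(z−β_j)) and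
φ_n^*/B̌_n^α = ς̌_n^β p_n^*/(π̌_n^β ∏_{j∈𝕒_n}(z−α_j)) (the value at β_n = ∞ being the
limit, i.e. the ratio of the coefficients of z^n). -/
def normG (α : ℕ → ℂ) (c : ℕ → Bool) (p : ℕ → Polynomial ℂ) (n : ℕ) : Prop :=
  if c n then
    posR (sigcA α c n * (pstar n (p n)).eval (α n) /
      ((pidA α c n).eval (α n) * (dB α c n).eval (α n)))
  else if α n = 0 then
    posR (sigcB α c n * (pstar n (p n)).coeff n / ((pidB α c n) * dA α c n).coeff n)
  else
    posR (sigcB α c n * (pstar n (p n)).eval ((conj' (α n))⁻¹) /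
      ((pidB α c n) * dA α c n).eval ((conj' (α n))⁻¹))

/-- the reproducing kernel k_n(z,w) = Σ_{k=0}^n φ_k(z) conj(φ_k(w)) -/
def ker (φ : ℕ → ℂ → ℂ) (n : ℕ) (z w : ℂ) : ℂ :=
  ∑ k ∈ Finset.range (n + 1), φ k z * conj' (φ k w)

/-- evaluation of a polynomial of degree ≤ m at γ_j (its coefficient of z^m when γ_j = ∞) -/
def gEval (α : ℕ → ℂ) (c : ℕ → Bool) (m j : ℕ) (q : Polynomial ℂ) : ℂ :=
  if c j then q.eval (α j)
  else if α j = 0 then q.coeff m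
  else q.eval ((conj' (α j))⁻¹)

/-- evaluation of a polynomial of degree ≤ m at β_j (its coefficient of z^m when β_j = ∞) -/
def bEval (α : ℕ → ℂ) (m j : ℕ) (q : Polynomial ℂ) : ℂ :=
  if α j = 0 then q.coeff m else q.eval ((conj' (α j))⁻¹)

/-- η_n^α (the unimodular constant in the Szegő parameter λ_n^α) -/
def etaA (α : ℕ → ℂ) (p : ℕ → Polynomial ℂ) (n : ℕ) : ℂ :=
  conj' (sigProd α (n - 2)) * conj' ((pstar (n - 1) (p (n - 1))).eval (α (n - 1))) /
    ((pstar (n - 1) (p (n - 1))).eval (α (n - 1)))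

/-- the Szegő parameter λ_n^α -/
def lamA (α : ℕ → ℂ) (p : ℕ → Polynomial ℂ) (n : ℕ) : ℂ :=
  etaA α p n * (p n).eval (α (n - 1)) / conj' ((pstar n (p n)).eval (α (n - 1)))

/-- η_n^β -/
def etaB (α : ℕ → ℂ) (p : ℕ → Polynomial ℂ) (n : ℕ) : ℂ :=
  conj' (sigProd α (n - 2)) * conj' (bEval α (n - 1) (n - 1) (pstar (n - 1) (p (n - 1)))) /
    (bEval α (n - 1) (n - 1) (pstar (n - 1) (p (n - 1))))

/-- the Szegő parameter λ_n^β -/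
def lamB (α : ℕ → ℂ) (p : ℕ → Polynomial ℂ) (n : ℕ) : ℂ :=
  etaB α p n * bEval α n (n - 1) (p n) / conj' (bEval α n (n - 1) (pstar n (p n)))

/-- η_n = η_n^γ -/
def etaG (α : ℕ → ℂ) (c : ℕ → Bool) (p : ℕ → Polynomial ℂ) (n : ℕ) : ℂ :=
  conj' (sigProd α (n - 2)) * conj' (gEval α c (n - 1) (n - 1) (pstar (n - 1) (p (n - 1)))) /
    (gEval α c (n - 1) (n - 1) (pstar (n - 1) (p (n - 1))))

/-- the Szegő parameter λ_n = λ_n^γ -/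
def lamG (α : ℕ → ℂ) (c : ℕ → Bool) (p : ℕ → Polynomial ℂ) (n : ℕ) : ℂ :=
  etaG α c p n * gEval α c n (n - 1) (p n) / conj' (gEval α c n (n - 1) (pstar n (p n)))

/-- functions of the second kind: ψ(z) = ∫ E(t,z) φ(t) − D(t,z) φ(z) dμ(t) -/
def psi (μ : Measure ℂ) (φ : ℂ → ℂ) (z : ℂ) : ℂ :=
  ∫ t, (2 * t / (t - z)) * φ t - ((t + z) / (t - z)) * φ z ∂μ

/-- ∏_{j=k+1}^n ϖ_j -/
def tailProd (α : ℕ → ℂ) (c : ℕ → Bool) (n k : ℕ) : Polynomial ℂ :=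
  ∏ j ∈ Finset.Icc (k + 1) n, wG α c j

/-- the numerator C_n(z,w) of the kernel k_n = C_n/(π_n(z) conj(π_n(w))), as a polynomial
in w after conjugation: C_n(z,w) = conj((CnPoly n z).eval w) -/
def CnPoly (α : ℕ → ℂ) (c : ℕ → Bool) (p : ℕ → Polynomial ℂ) (n : ℕ) (z : ℂ) : Polynomial ℂ :=
  ∑ k ∈ Finset.range (n + 1),
    Polynomial.C (conj' ((p k).eval z * (tailProd α c n k).eval z)) * ((p k) * tailProd α c n k)

/-- z ↦ C_n(z,∞) (the coefficient of w^n of w ↦ C_n(z,w)), as a polynomial in z -/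
def CnInf (α : ℕ → ℂ) (c : ℕ → Bool) (p : ℕ → Polynomial ℂ) (n : ℕ) : Polynomial ℂ :=
  ∑ k ∈ Finset.range (n + 1),
    ((p k) * tailProd α c n k) * Polynomial.C (conj' (((p k) * tailProd α c n k).coeff n))

/-- ϖ_n^*(z) = z − γ_n (= −1 when γ_n = ∞) -/
def wstarG (α : ℕ → ℂ) (c : ℕ → Bool) (n : ℕ) : Polynomial ℂ :=
  if c n then Polynomial.X - Polynomial.C (α n)
  else if α n = 0 then -1
  else Polynomial.X - Polynomial.C ((conj' (α n))⁻¹)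

end ORF

open ORF MeasureTheory
namespace ORFAux
open ORF Polynomial

lemma onT_ne_zero {z : ℂ} (h : onT z) : z ≠ 0 := by
  intro h0; rw [onT, h0] at h; simp at h

lemma onT_conj_mul {z : ℂ} (h : onT z) : conj' z * z = 1 := by
  rw [conj', mul_comm, Complex.mul_conj]
  rw [← Complex.sq_norm, onT] at *
  rw [h]; norm_num

lemma absmul (w : ℂ) : ((‖w‖ : ℝ) : ℂ) * ((‖w‖ : ℝ) : ℂ) = (starRingEnd ℂ) w * w := by
  rw [mul_comm ((starRingEnd ℂ) w) w, Complex.mul_conj, ← Complex.ofReal_mul]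
  norm_cast
  rw [← Complex.sq_norm]; ring

lemma conj_ne {w : ℂ} (h : w ≠ 0) : conj' w ≠ 0 := by
  simpa [conj'] using h

lemma abs_sig {α : ℕ → ℂ} (j : ℕ) (h : α j ≠ 0) :
    sig α j * conj' (sig α j) = 1 := by
  rw [sig, if_neg h]
  have hab : ((‖α j‖ : ℝ) : ℂ) ≠ 0 :=
    Complex.ofReal_ne_zero.mpr (norm_ne_zero_iff.mpr h)
  simp only [conj', map_div₀, Complex.conj_conj, Complex.conj_ofReal]
  rw [div_mul_div_comm, ← absmul]
  exact div_self (mul_ne_zero hab hab)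

lemma sig_sq {α : ℕ → ℂ} (j : ℕ) (h : α j ≠ 0) :
    sig α j * sig α j * α j = conj' (α j) := by
  rw [sig, if_neg h]
  have hab : ((‖α j‖ : ℝ) : ℂ) ≠ 0 :=
    Complex.ofReal_ne_zero.mpr (norm_ne_zero_iff.mpr h)
  simp only [conj']
  rw [div_mul_div_comm, absmul]
  have hc : (starRingEnd ℂ) (α j) ≠ 0 := conj_ne h
  field_simp

lemma sig_ne_zero {α : ℕ → ℂ} (j : ℕ) : sig α j ≠ 0 := by
  rw [sig]
  split
  · exact one_ne_zero
  · rename_i h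
    have hab : ((‖α j‖ : ℝ) : ℂ) ≠ 0 :=
      Complex.ofReal_ne_zero.mpr (norm_ne_zero_iff.mpr h)
    exact div_ne_zero (conj_ne h) hab

end ORFAux
namespace ORFAux
open ORF Polynomial

variable {α : ℕ → ℂ}

lemma wA_eval (j : ℕ) (z : ℂ) : (wA α j).eval z = 1 - conj' (α j) * z := by
  simp [wA]

lemma wB_eval (j : ℕ) (z : ℂ) :
    (wB α j).eval z = if α j = 0 then -z else 1 - (α j)⁻¹ * z := by
  rw [wB]; split <;> simp

lemma wA_eval_ne (hα : ∀ j, ‖α j‖ < 1) (j : ℕ) {z : ℂ} (hz : onT z) :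
    (wA α j).eval z ≠ 0 := by
  rw [wA_eval]
  intro h0
  have h1 : conj' (α j) * z = 1 := by linear_combination -h0
  have := congrArg norm h1
  simp only [norm_mul, norm_one, conj', Complex.norm_conj] at this
  rw [hz, mul_one] at this
  exact absurd this (ne_of_lt (hα j))

lemma wB_eval_ne (hα : ∀ j, ‖α j‖ < 1) (j : ℕ) {z : ℂ} (hz : onT z) :
    (wB α j).eval z ≠ 0 := by
  rw [wB_eval]
  split
  · simpa using onT_ne_zero hz
  · rename_i h
    intro h0
    have h1 : (α j)⁻¹ * z = 1 := by linear_combination -h0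
    field_simp at h1
    rw [onT, h1] at hz
    exact absurd hz (ne_of_lt (hα j))

/-- constant with ζ_j^β = ϖ_j^α / (ccB j · ϖ_j^β) -/
def ccB (α : ℕ → ℂ) (j : ℕ) : ℂ := if α j = 0 then -1 else -(sig α j * α j)

/-- constant with ζ_j^α = sig j · ddA j · ϖ_j^β / ϖ_j^α -/
def ddA (α : ℕ → ℂ) (j : ℕ) : ℂ := if α j = 0 then -1 else -(α j)

lemma ccB_ne_zero (j : ℕ) : ccB α j ≠ 0 := by
  rw [ccB]; split
  · norm_num
  · rename_i h
    simpa using mul_ne_zero (sig_ne_zero j) h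

lemma zetaB_eq (hα : ∀ j, ‖α j‖ < 1) (j : ℕ) {z : ℂ} (hz : onT z) :
    zetaB α j z = (wA α j).eval z / (ccB α j * (wB α j).eval z) := by
  rw [zetaB, ccB, wA_eval, wB_eval]
  split
  · rename_i h
    rw [h]
    simp [conj']
  · rename_i h
    have hB : (1 : ℂ) - (α j)⁻¹ * z ≠ 0 := by
      have := wB_eval_ne hα j hz; rw [wB_eval, if_neg h] at this; exact this
    have hB' : (1 : ℂ) - z / α j ≠ 0 := by rw [div_eq_inv_mul] at *; exact hB
    have hs := sig_sq j h
    have hc : conj' (α j) ≠ 0 := conj_ne h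
    rw [div_eq_div_iff hB' (mul_ne_zero (neg_ne_zero.mpr (mul_ne_zero (sig_ne_zero j) h)) hB)]
    have hsn := sig_ne_zero (α := α) j
    rw [← hs]
    field_simp
    ring

lemma zetaA_eq (hα : ∀ j, ‖α j‖ < 1) (j : ℕ) {z : ℂ} (hz : onT z) :
    zetaA α j z = sig α j * ddA α j * (wB α j).eval z / (wA α j).eval z := by
  rw [zetaA, ddA, wA_eval, wB_eval]
  split
  · rename_i h
    rw [h]
    simp [sig, h, conj']
  · rename_i h
    have hA : (1 : ℂ) - conj' (α j) * z ≠ 0 := by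
      have := wA_eval_ne hα j hz; rw [wA_eval] at this; exact this
    field_simp
    ring

end ORFAux
namespace ORFAux
open ORF Polynomial

variable {α : ℕ → ℂ}

lemma sdd (j : ℕ) : sig α j * ddA α j = ccB α j := by
  rw [ddA, ccB]
  split
  · rename_i h; simp [sig, h]
  · ring

lemma zetaAB (hα : ∀ j, ‖α j‖ < 1) (j : ℕ) {z : ℂ} (hz : onT z) :
    zetaA α j z * zetaB α j z = 1 := by
  rw [zetaA_eq hα j hz, zetaB_eq hα j hz, div_mul_div_comm]
  have h1 := wA_eval_ne hα j hz
  have h2 := wB_eval_ne hα j hz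
  have h3 := ccB_ne_zero (α := α) j
  rw [div_eq_one_iff_eq (mul_ne_zero h1 (mul_ne_zero h3 h2))]
  linear_combination ((wB α j).eval z * (wA α j).eval z) * sdd (α := α) j

lemma modA (hα : ∀ j, ‖α j‖ < 1) (j : ℕ) {z : ℂ} (hz : onT z) :
    conj' (zetaA α j z) * zetaA α j z = 1 := by
  rw [zetaA]
  split
  · exact onT_conj_mul hz
  · rename_i h
    have hA : (1 : ℂ) - conj' (α j) * z ≠ 0 := by
      have := wA_eval_ne hα j hz; rw [wA_eval] at this; exact this
    have hA' : (1 : ℂ) - α j * conj' z ≠ 0 := by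
      intro h0
      apply hA
      have := congrArg conj' h0
      simpa [conj', map_sub, map_mul, mul_comm] using this
    have habs := abs_sig j h
    have hT := onT_conj_mul hz
    simp only [conj', map_div₀, map_mul, map_sub, map_one, Complex.conj_conj] at *
    rw [div_mul_div_comm, div_eq_one_iff_eq (mul_ne_zero hA' hA)]
    linear_combination (((starRingEnd ℂ) z - (starRingEnd ℂ) (α j)) * (z - α j)) * habs +
      (1 - α j * (starRingEnd ℂ) (α j)) * hT

lemma conj_zetaA (hα : ∀ j, ‖α j‖ < 1) (j : ℕ) {z : ℂ} (hz : onT z) :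
    conj' (zetaA α j z) = zetaB α j z := by
  calc conj' (zetaA α j z) = conj' (zetaA α j z) * (zetaA α j z * zetaB α j z) := by
        rw [zetaAB hα j hz, mul_one]
    _ = (conj' (zetaA α j z) * zetaA α j z) * zetaB α j z := by ring
    _ = zetaB α j z := by rw [modA hα j hz, one_mul]

lemma conj_zetaB (hα : ∀ j, ‖α j‖ < 1) (j : ℕ) {z : ℂ} (hz : onT z) :
    conj' (zetaB α j z) = zetaA α j z := by
  have := congrArg conj' (conj_zetaA hα j hz)
  simp only [conj', Complex.conj_conj] at this
  exact this.symm

end ORFAux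
namespace ORFAux
open ORF Polynomial

variable {α : ℕ → ℂ} {c : ℕ → Bool}

lemma filter_not_eq (c : ℕ → Bool) (n : ℕ) :
    (Finset.Icc 1 n).filter (fun j => ¬ c j = true) = bSet c n := by
  ext j; simp [bSet]

lemma piG_split (α : ℕ → ℂ) (c : ℕ → Bool) (n : ℕ) :
    piG α c n = pidA α c n * pidB α c n := by
  rw [piG, pidA, pidB, aSet,
    ← Finset.prod_filter_mul_prod_filter_not (Finset.Icc 1 n) (fun j => c j = true) (wG α c),
    ← filter_not_eq]
  congr 1
  · exact Finset.prod_congr rfl fun j hj => by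
      rw [wG, if_pos (Finset.mem_filter.mp hj).2]
  · exact Finset.prod_congr rfl fun j hj => by
      rw [wG, if_neg]
      have := (Finset.mem_filter.mp hj).2
      simpa using this

lemma piA_split (α : ℕ → ℂ) (c : ℕ → Bool) (n : ℕ) :
    piA α n = pidA α c n * ∏ j ∈ bSet c n, wA α j := by
  rw [piA, pidA, aSet, ← filter_not_eq,
    ← Finset.prod_filter_mul_prod_filter_not (Finset.Icc 1 n) (fun j => c j = true) (wA α)]

lemma piB_split (α : ℕ → ℂ) (c : ℕ → Bool) (n : ℕ) :
    piB α n = (∏ j ∈ aSet c n, wB α j) * pidB α c n := by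
  rw [piB, pidB, aSet, ← filter_not_eq,
    ← Finset.prod_filter_mul_prod_filter_not (Finset.Icc 1 n) (fun j => c j = true) (wB α)]

lemma BcB_eq (α : ℕ → ℂ) (c : ℕ → Bool) (n : ℕ) (z : ℂ) :
    BcB α c n z = ∏ j ∈ bSet c n, zetaB α j z := by
  rw [BcB]
  refine Finset.prod_congr rfl fun j hj => ?_
  rw [zetaG, if_neg]
  have := (Finset.mem_filter.mp hj).2
  simp [this]

lemma BcA_eq (α : ℕ → ℂ) (c : ℕ → Bool) (n : ℕ) (z : ℂ) :
    BcA α c n z = ∏ j ∈ aSet c n, zetaA α j z := by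
  rw [BcA]
  refine Finset.prod_congr rfl fun j hj => ?_
  rw [zetaG, if_pos (Finset.mem_filter.mp hj).2]

lemma Icc_eq {n : ℕ} (hn : 1 ≤ n) :
    Finset.Icc 1 n = insert n (Finset.Icc 1 (n - 1)) := by
  ext j; simp only [Finset.mem_Icc, Finset.mem_insert]; omega

lemma not_mem_aSet (c : ℕ → Bool) (n : ℕ) : n ∉ aSet c (n - 1) ∨ n = 0 := by
  by_cases h : n = 0
  · exact Or.inr h
  · left; intro hm
    have := (Finset.mem_filter.mp hm).1
    simp [Finset.mem_Icc] at this
    omega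

lemma not_mem_aSet' {n : ℕ} (hn : 1 ≤ n) (c : ℕ → Bool) : n ∉ aSet c (n - 1) := by
  intro hm
  have := (Finset.mem_filter.mp hm).1
  simp [Finset.mem_Icc] at this
  omega

lemma not_mem_bSet' {n : ℕ} (hn : 1 ≤ n) (c : ℕ → Bool) : n ∉ bSet c (n - 1) := by
  intro hm
  have := (Finset.mem_filter.mp hm).1
  simp [Finset.mem_Icc] at this
  omega

lemma aSet_true {n : ℕ} (hn : 1 ≤ n) (h : c n = true) :
    aSet c n = insert n (aSet c (n - 1)) := by
  rw [aSet, Icc_eq hn, Finset.filter_insert, if_pos h, aSet]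

lemma aSet_false {n : ℕ} (hn : 1 ≤ n) (h : c n = false) :
    aSet c n = aSet c (n - 1) := by
  rw [aSet, Icc_eq hn, Finset.filter_insert, if_neg (by simp [h]), aSet]

lemma bSet_true {n : ℕ} (hn : 1 ≤ n) (h : c n = true) :
    bSet c n = bSet c (n - 1) := by
  rw [bSet, Icc_eq hn, Finset.filter_insert, if_neg (by simp [h]), bSet]

lemma bSet_false {n : ℕ} (hn : 1 ≤ n) (h : c n = false) :
    bSet c n = insert n (bSet c (n - 1)) := by
  rw [bSet, Icc_eq hn, Finset.filter_insert, if_pos h, bSet]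

end ORFAux
namespace ORFAux
open ORF Polynomial

variable {α : ℕ → ℂ} {c : ℕ → Bool}

lemma prodA_ne (hα : ∀ j, ‖α j‖ < 1) (s : Finset ℕ) {z : ℂ} (hz : onT z) :
    (∏ j ∈ s, (wA α j).eval z) ≠ 0 :=
  Finset.prod_ne_zero_iff.mpr fun j _ => wA_eval_ne hα j hz

lemma prodB_ne (hα : ∀ j, ‖α j‖ < 1) (s : Finset ℕ) {z : ℂ} (hz : onT z) :
    (∏ j ∈ s, (wB α j).eval z) ≠ 0 :=
  Finset.prod_ne_zero_iff.mpr fun j _ => wB_eval_ne hα j hz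

lemma evalG (n : ℕ) (z : ℂ) : (piG α c n).eval z =
    (∏ j ∈ aSet c n, (wA α j).eval z) * ∏ j ∈ bSet c n, (wB α j).eval z := by
  rw [piG_split α c n, eval_mul, pidA, pidB, eval_prod, eval_prod]

lemma evalA (c : ℕ → Bool) (n : ℕ) (z : ℂ) : (piA α n).eval z =
    (∏ j ∈ aSet c n, (wA α j).eval z) * ∏ j ∈ bSet c n, (wA α j).eval z := by
  rw [piA_split α c n, eval_mul, pidA, eval_prod, eval_prod]

lemma evalB (c : ℕ → Bool) (n : ℕ) (z : ℂ) : (piB α n).eval z =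
    (∏ j ∈ aSet c n, (wB α j).eval z) * ∏ j ∈ bSet c n, (wB α j).eval z := by
  rw [piB_split α c n, eval_mul, pidB, eval_prod, eval_prod]

lemma memA (hα : ∀ j, ‖α j‖ < 1) (φA : ℕ → ℂ → ℂ) (pA : ℕ → Polynomial ℂ)
    (hrep : ∀ n z, φA n z = (pA n).eval z / (piA α n).eval z)
    (hdeg : ∀ n, (pA n).natDegree ≤ n) (n : ℕ) :
    (fun z => φA n z * BcB α c n z) ∈ Lsp (piG α c) n := by
  refine ⟨Polynomial.C ((∏ j ∈ bSet c n, ccB α j)⁻¹) * pA n,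
    le_trans (natDegree_C_mul_le _ _) (hdeg n), fun z hz => ?_⟩
  beta_reduce
  rw [hrep n z, BcB_eq, Finset.prod_congr rfl (fun j _ => zetaB_eq hα j hz),
    Finset.prod_div_distrib, Finset.prod_mul_distrib, evalG, evalA c, eval_mul, eval_C]
  have h1 := prodA_ne hα (aSet c n) hz
  have h2 := prodA_ne hα (bSet c n) hz
  have h3 := prodB_ne hα (bSet c n) hz
  have h4 : (∏ j ∈ bSet c n, ccB α j) ≠ 0 :=
    Finset.prod_ne_zero_iff.mpr fun j _ => ccB_ne_zero j
  field_simp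

lemma memB (hα : ∀ j, ‖α j‖ < 1) (φB : ℕ → ℂ → ℂ) (pB : ℕ → Polynomial ℂ)
    (hrep : ∀ n z, φB n z = (pB n).eval z / (piB α n).eval z)
    (hdeg : ∀ n, (pB n).natDegree ≤ n) (n : ℕ) :
    (fun z => φB n z * BcA α c n z) ∈ Lsp (piG α c) n := by
  refine ⟨Polynomial.C (∏ j ∈ aSet c n, (sig α j * ddA α j)) * pB n,
    le_trans (natDegree_C_mul_le _ _) (hdeg n), fun z hz => ?_⟩
  beta_reduce
  rw [hrep n z, BcA_eq, Finset.prod_congr rfl (fun j _ => zetaA_eq hα j hz),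
    Finset.prod_div_distrib, Finset.prod_mul_distrib, evalG, evalB c, eval_mul, eval_C]
  have h1 := prodA_ne hα (aSet c n) hz
  have h2 := prodB_ne hα (aSet c n) hz
  have h3 := prodB_ne hα (bSet c n) hz
  field_simp

lemma hmemA (hα : ∀ j, ‖α j‖ < 1) (m : ℕ) (g : ℂ → ℂ) (q : Polynomial ℂ)
    (hq : q.natDegree ≤ m) (hgrep : ∀ z, onT z → g z = q.eval z / (piG α c m).eval z) :
    (fun z => (∏ j ∈ bSet c m, zetaA α j z) * g z) ∈ Lsp (piA α) m := by
  refine ⟨Polynomial.C (∏ j ∈ bSet c m, (sig α j * ddA α j)) * q,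
    le_trans (natDegree_C_mul_le _ _) hq, fun z hz => ?_⟩
  beta_reduce
  rw [hgrep z hz, Finset.prod_congr rfl (fun j _ => zetaA_eq hα j hz),
    Finset.prod_div_distrib, Finset.prod_mul_distrib, evalG, evalA c, eval_mul, eval_C]
  have h1 := prodA_ne hα (aSet c m) hz
  have h2 := prodA_ne hα (bSet c m) hz
  have h3 := prodB_ne hα (bSet c m) hz
  field_simp

lemma hmemB (hα : ∀ j, ‖α j‖ < 1) (m : ℕ) (g : ℂ → ℂ) (q : Polynomial ℂ)
    (hq : q.natDegree ≤ m) (hgrep : ∀ z, onT z → g z = q.eval z / (piG α c m).eval z) :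
    (fun z => (∏ j ∈ aSet c m, zetaB α j z) * g z) ∈ Lsp (piB α) m := by
  refine ⟨Polynomial.C ((∏ j ∈ aSet c m, ccB α j)⁻¹) * q,
    le_trans (natDegree_C_mul_le _ _) hq, fun z hz => ?_⟩
  beta_reduce
  rw [hgrep z hz, Finset.prod_congr rfl (fun j _ => zetaB_eq hα j hz),
    Finset.prod_div_distrib, Finset.prod_mul_distrib, evalG, evalB c, eval_mul, eval_C]
  have h1 := prodA_ne hα (aSet c m) hz
  have h2 := prodB_ne hα (aSet c m) hz
  have h3 := prodB_ne hα (bSet c m) hz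
  have h4 : (∏ j ∈ aSet c m, ccB α j) ≠ 0 :=
    Finset.prod_ne_zero_iff.mpr fun j _ => ccB_ne_zero j
  field_simp

end ORFAux
namespace ORFAux
open ORF Polynomial MeasureTheory

variable {α : ℕ → ℂ} {c : ℕ → Bool}

lemma conj'_mul (a b : ℂ) : conj' (a * b) = conj' a * conj' b := by
  simp [conj']

lemma conj_BcB (hα : ∀ j, ‖α j‖ < 1) (n : ℕ) {z : ℂ} (hz : onT z) :
    conj' (BcB α c n z) = ∏ j ∈ bSet c n, zetaA α j z := by
  rw [BcB_eq, conj', map_prod]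
  exact Finset.prod_congr rfl fun j _ => conj_zetaB hα j hz

lemma conj_BcA (hα : ∀ j, ‖α j‖ < 1) (n : ℕ) {z : ℂ} (hz : onT z) :
    conj' (BcA α c n z) = ∏ j ∈ aSet c n, zetaB α j z := by
  rw [BcA_eq, conj', map_prod]
  exact Finset.prod_congr rfl fun j _ => conj_zetaA hα j hz

lemma ptA (hα : ∀ j, ‖α j‖ < 1) (φA : ℕ → ℂ → ℂ) (g : ℂ → ℂ)
    {n : ℕ} (hn : 1 ≤ n) {z : ℂ} (hz : onT z) :
    conj' (φA n z * BcB α c n z) * (zcB α c n z * g z) =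
      conj' (φA n z) * ((∏ j ∈ bSet c (n - 1), zetaA α j z) * g z) := by
  rw [conj'_mul, conj_BcB hα n hz, zcB]
  cases hc : c n with
  | true =>
    rw [if_pos rfl, bSet_true hn hc]
    ring
  | false =>
    rw [if_neg (by simp [hc]), bSet_false hn hc,
      Finset.prod_insert (not_mem_bSet' hn c), zetaG, if_neg (by simp [hc])]
    linear_combination (conj' (φA n z) * (∏ j ∈ bSet c (n - 1), zetaA α j z) * g z) *
      zetaAB hα n hz

lemma ptB (hα : ∀ j, ‖α j‖ < 1) (φB : ℕ → ℂ → ℂ) (g : ℂ → ℂ)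
    {n : ℕ} (hn : 1 ≤ n) {z : ℂ} (hz : onT z) :
    conj' (φB n z * BcA α c n z) * (zcA α c n z * g z) =
      conj' (φB n z) * ((∏ j ∈ aSet c (n - 1), zetaB α j z) * g z) := by
  rw [conj'_mul, conj_BcA hα n hz, zcA]
  cases hc : c n with
  | false =>
    rw [if_neg (by simp [hc]), aSet_false hn hc]
    ring
  | true =>
    rw [if_pos rfl, aSet_true hn hc,
      Finset.prod_insert (not_mem_aSet' hn c), zetaG, if_pos hc]
    linear_combination (conj' (φB n z) * (∏ j ∈ aSet c (n - 1), zetaB α j z) * g z) *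
      zetaAB hα n hz

lemma orthA (hα : ∀ j, ‖α j‖ < 1) (μ : Measure ℂ) (hμ : CircleMeasure μ)
    (φA : ℕ → ℂ → ℂ) (pA : ℕ → Polynomial ℂ) (hA : IsORF μ (piA α) φA pA)
    (n : ℕ) (hn : 1 ≤ n) :
    ∀ g ∈ Lsp (piG α c) (n - 1),
      inn μ (fun z => φA n z * BcB α c n z) (fun z => zcB α c n z * g z) = 0 := by
  rintro g ⟨q, hq, hgrep⟩
  set h : ℂ → ℂ := fun z => (∏ j ∈ bSet c (n - 1), zetaA α j z) * g z with hh
  have hmem : h ∈ Lsp (piA α) (n - 1) := hmemA hα (n - 1) g q hq hgrep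
  have hsub : {z : ℂ | ¬ (conj' (φA n z * BcB α c n z) * (zcB α c n z * g z) =
      conj' (φA n z) * h z)} ⊆ {z | ¬ onT z} :=
    fun z hne hT => hne (ptA hα φA g hn hT)
  have hEq : (fun z => conj' (φA n z * BcB α c n z) * (zcB α c n z * g z)) =ᵐ[μ]
      (fun z => conj' (φA n z) * h z) :=
    (ae_iff).mpr (measure_mono_null hsub hμ.circ)
  calc inn μ (fun z => φA n z * BcB α c n z) (fun z => zcB α c n z * g z)
      = ∫ z, conj' (φA n z) * h z ∂μ := integral_congr_ae hEq
    _ = 0 := hA.orth n hn h hmem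

lemma orthB (hα : ∀ j, ‖α j‖ < 1) (μ : Measure ℂ) (hμ : CircleMeasure μ)
    (φB : ℕ → ℂ → ℂ) (pB : ℕ → Polynomial ℂ) (hB : IsORF μ (piB α) φB pB)
    (n : ℕ) (hn : 1 ≤ n) :
    ∀ g ∈ Lsp (piG α c) (n - 1),
      inn μ (fun z => φB n z * BcA α c n z) (fun z => zcA α c n z * g z) = 0 := by
  rintro g ⟨q, hq, hgrep⟩
  set h : ℂ → ℂ := fun z => (∏ j ∈ aSet c (n - 1), zetaB α j z) * g z with hh
  have hmem : h ∈ Lsp (piB α) (n - 1) := hmemB hα (n - 1) g q hq hgrep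
  have hsub : {z : ℂ | ¬ (conj' (φB n z * BcA α c n z) * (zcA α c n z * g z) =
      conj' (φB n z) * h z)} ⊆ {z | ¬ onT z} :=
    fun z hne hT => hne (ptB hα φB g hn hT)
  have hEq : (fun z => conj' (φB n z * BcA α c n z) * (zcA α c n z * g z)) =ᵐ[μ]
      (fun z => conj' (φB n z) * h z) :=
    (ae_iff).mpr (measure_mono_null hsub hμ.circ)
  calc inn μ (fun z => φB n z * BcA α c n z) (fun z => zcA α c n z * g z)
      = ∫ z, conj' (φB n z) * h z ∂μ := integral_congr_ae hEq
    _ = 0 := hB.orth n hn h hmem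

end ORFAux

/-- Lemma 3: for n ≥ 1, φ_n^α·B̌_n^β ∈ L_n and is orthogonal to
ζ̌_n^β·L_{n−1}; similarly φ_n^β·B̌_n^α ∈ L_n and is orthogonal to ζ̌_n^α·L_{n−1}. -/
theorem stmt2 (α : ℕ → ℂ) (hα0 : α 0 = 0) (hα : ∀ j, ‖α j‖ < 1)
    (c : ℕ → Bool) (μ : Measure ℂ) (hμ : CircleMeasure μ)
    (φA φB : ℕ → ℂ → ℂ) (pA pB : ℕ → Polynomial ℂ)
    (hA : IsORF μ (piA α) φA pA) (hB : IsORF μ (piB α) φB pB)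
    (n : ℕ) (hn : 1 ≤ n) :
    ((fun z => φA n z * BcB α c n z) ∈ Lsp (piG α c) n ∧
      ∀ g ∈ Lsp (piG α c) (n - 1),
        inn μ (fun z => φA n z * BcB α c n z) (fun z => zcB α c n z * g z) = 0) ∧
    ((fun z => φB n z * BcA α c n z) ∈ Lsp (piG α c) n ∧
      ∀ g ∈ Lsp (piG α c) (n - 1),
        inn μ (fun z => φB n z * BcA α c n z) (fun z => zcA α c n z * g z) = 0) := by
  exact ⟨⟨ORFAux.memA hα φA pA hA.rep hA.deg n, ORFAux.orthA hα μ hμ φA pA hA n hn⟩,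
    ⟨ORFAux.memB hα φB pB hB.rep hB.deg n, ORFAux.orthB hα μ hμ φB pB hB n hn⟩⟩
end
end

section
/- With the stated normalization of the orthonormal rational functions, for all n ≥ 0 one has φ_n^α = (φ_n^β)_* and (φ_n^α)^*·B̌_n^β = φ_n^β·B̌_n^α, and hence also (φ_n^β)^*·B̌_n^α = φ_n^α·B̌_n^β. -/
noncomputable section
open MeasureTheory
open scoped Classical

namespace ORF

/-!
On `𝕋` we have `f_* = conj f`, and conjugation of `p / π_n^β` gives `p^* / (π_n^β)^*` with
`(π_n^β)^* = (∏ -β_j) π_n^α`; so it maps `L_n^β` onto `L_n^α` and conjugates inner products.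
Hence `(φ_n^β)_*` is a unit vector of `L_n^α` orthogonal to `L_{n-1}^α`. That orthogonal
complement is a line: a numerator of degree `≤ n` is one of `L_{n-1}^α` exactly when it vanishes
at `β_n`, and `φ_n^α ∉ L_{n-1}^α`. So `(φ_n^β)_* = c φ_n^α` with `|c| = 1`, and the two
normalizations force `c = 1`. The other identities follow from `φ_n^{α*} = B_n^α (φ_n^α)_*`
together with `B_n^α B̌_n^β = B̌_n^α` on `𝕋` (as `ζ_j^α ζ_j^β = 1` there), and symmetrically.
-/

open Polynomial

lemma onT_ne_zero {z : ℂ} (hz : onT z) : z ≠ 0 := by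
  rintro rfl
  simp [onT] at hz

lemma conj'_eq_inv_of_onT {z : ℂ} (hz : onT z) : conj' z = z⁻¹ := by
  rw [Complex.inv_def, Complex.normSq_eq_norm_sq, show ‖z‖ = 1 from hz]
  simp [conj']

lemma inv_conj'_of_onT {z : ℂ} (hz : onT z) : (conj' z)⁻¹ = z := by
  rw [conj'_eq_inv_of_onT hz, inv_inv]

lemma pstar_coeff (n : ℕ) (p : ℂ[X]) (m : ℕ) :
    (pstar n p).coeff m = if m ≤ n then conj' (p.coeff (n - m)) else 0 := by
  simp only [pstar, finsetSum_coeff, coeff_C_mul, coeff_X_pow]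
  split_ifs with hm
  · rw [Finset.sum_eq_single (n - m)]
    · simp [Nat.sub_sub_self hm]
    · intro k hk hne
      simp only [Finset.mem_range] at hk
      simp [show m ≠ n - k by omega]
    · simp
  · refine Finset.sum_eq_zero fun k hk => ?_
    simp only [Finset.mem_range] at hk
    simp [show m ≠ n - k by omega]

lemma pstar_natDegree_le (n : ℕ) (p : ℂ[X]) : (pstar n p).natDegree ≤ n :=
  natDegree_le_iff_coeff_eq_zero.mpr fun m hm => by
    rw [pstar_coeff, if_neg (by exact_mod_cast hm.not_ge)]

lemma pstar_pstar {n : ℕ} {p : ℂ[X]} (hp : p.natDegree ≤ n) : pstar n (pstar n p) = p := by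
  ext m
  rw [pstar_coeff]
  split_ifs with hm
  · rw [pstar_coeff, if_pos (Nat.sub_le n m), Nat.sub_sub_self hm]
    simp [conj']
  · exact (coeff_eq_zero_of_natDegree_lt (by omega)).symm

lemma pstar_C_mul (n : ℕ) (a : ℂ) (p : ℂ[X]) :
    pstar n (C a * p) = C (conj' a) * pstar n p := by
  ext m
  simp only [coeff_C_mul, pstar_coeff]
  split_ifs <;> simp [conj']

lemma pstar_eval {n : ℕ} {p : ℂ[X]} (hp : p.natDegree ≤ n) {w : ℂ} (hw : w ≠ 0) :
    (pstar n p).eval w = w ^ n * conj' (p.eval (conj' w)⁻¹) := by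
  rw [eval_eq_sum_range' (Nat.lt_succ_of_le hp), pstar, eval_finsetSum, conj', map_sum,
    Finset.mul_sum]
  refine Finset.sum_congr rfl fun k hk => ?_
  have hkn : k ≤ n := Nat.lt_succ_iff.mp (Finset.mem_range.mp hk)
  simp only [eval_mul, eval_C, eval_pow, eval_X, map_mul, map_pow, map_inv₀, conj',
    Complex.conj_conj, pow_sub₀ w hw hkn, inv_pow]
  ring

lemma pstar_eval_onT {n : ℕ} {p : ℂ[X]} (hp : p.natDegree ≤ n) {z : ℂ} (hz : onT z) :
    (pstar n p).eval z = z ^ n * conj' (p.eval z) := by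
  rw [pstar_eval hp (onT_ne_zero hz), inv_conj'_of_onT hz]

lemma pstar_eval_zero (n : ℕ) (p : ℂ[X]) : (pstar n p).eval 0 = conj' (p.coeff n) := by
  simp [← coeff_zero_eq_eval_zero, pstar_coeff]

lemma conj'_eval_div_eval_of_onT {n : ℕ} {p q : ℂ[X]} (hp : p.natDegree ≤ n)
    (hq : q.natDegree ≤ n) {z : ℂ} (hz : onT z) :
    conj' (p.eval z / q.eval z) = (pstar n p).eval z / (pstar n q).eval z := by
  rw [pstar_eval_onT hp hz, pstar_eval_onT hq hz,
    mul_div_mul_left _ _ (pow_ne_zero n (onT_ne_zero hz)), conj', map_div₀]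
  rfl

/-- `-β_j`, read as `-1` when `β_j = ∞`: the constant in `(ϖ_j^β)^* = -β_j ϖ_j^α`. -/
def negBeta (α : ℕ → ℂ) (j : ℕ) : ℂ := if α j = 0 then -1 else -(conj' (α j))⁻¹

def negBetaProd (α : ℕ → ℂ) (n : ℕ) : ℂ := ∏ j ∈ Finset.Icc 1 n, negBeta α j

lemma negBetaProd_ne_zero (α : ℕ → ℂ) (n : ℕ) : negBetaProd α n ≠ 0 :=
  Finset.prod_ne_zero_iff.mpr fun j _ => by
    unfold negBeta
    split_ifs with h
    · norm_num
    · simpa [conj'] using h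

lemma wA_eval (α : ℕ → ℂ) (j : ℕ) (z : ℂ) : (wA α j).eval z = 1 - conj' (α j) * z := by
  simp [wA]

lemma wB_eval (α : ℕ → ℂ) (j : ℕ) (z : ℂ) :
    (wB α j).eval z = if α j = 0 then -z else 1 - (α j)⁻¹ * z := by
  unfold wB
  split_ifs <;> simp

lemma wA_eval_ne_zero {α : ℕ → ℂ} (hα : ∀ j, ‖α j‖ < 1) (j : ℕ) {z : ℂ} (hz : ‖z‖ ≤ 1) :
    (wA α j).eval z ≠ 0 := by
  rw [wA_eval, sub_ne_zero]
  intro h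
  have h1 : ‖conj' (α j) * z‖ = 1 := by rw [← h, norm_one]
  rw [norm_mul, conj', Complex.norm_conj] at h1
  nlinarith [hα j, norm_nonneg (α j), norm_nonneg z]

lemma wB_eval_ne_zero {α : ℕ → ℂ} (hα : ∀ j, ‖α j‖ < 1) (j : ℕ) {z : ℂ} (hz : 1 ≤ ‖z‖) :
    (wB α j).eval z ≠ 0 := by
  have hz0 : z ≠ 0 := norm_pos_iff.mp (by linarith)
  rw [wB_eval]
  split_ifs with h
  · exact neg_ne_zero.mpr hz0
  · rw [sub_ne_zero]
    intro h1
    have h2 : ‖α j‖ = ‖z‖ := by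
      rw [eq_inv_mul_iff_mul_eq₀ h, mul_one] at h1
      rw [h1]
    linarith [hα j]

lemma piA_eval_ne_zero {α : ℕ → ℂ} (hα : ∀ j, ‖α j‖ < 1) (n : ℕ) {z : ℂ} (hz : ‖z‖ ≤ 1) :
    (piA α n).eval z ≠ 0 := by
  rw [piA, eval_prod]
  exact Finset.prod_ne_zero_iff.mpr fun j _ => wA_eval_ne_zero hα j hz

lemma piB_eval_ne_zero {α : ℕ → ℂ} (hα : ∀ j, ‖α j‖ < 1) (n : ℕ) {z : ℂ} (hz : 1 ≤ ‖z‖) :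
    (piB α n).eval z ≠ 0 := by
  rw [piB, eval_prod]
  exact Finset.prod_ne_zero_iff.mpr fun j _ => wB_eval_ne_zero hα j hz

lemma piA_succ (α : ℕ → ℂ) (m : ℕ) : piA α (m + 1) = piA α m * wA α (m + 1) :=
  Finset.prod_Icc_succ_top (Nat.le_add_left 1 m) _

lemma natDegree_prod_Icc_le {f : ℕ → ℂ[X]} (hf : ∀ j, (f j).natDegree ≤ 1) (n : ℕ) :
    (∏ j ∈ Finset.Icc 1 n, f j).natDegree ≤ n :=
  (natDegree_prod_le _ _).trans <| (Finset.sum_le_sum fun j _ => hf j).trans (by simp)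

lemma natDegree_piA_le (α : ℕ → ℂ) (n : ℕ) : (piA α n).natDegree ≤ n :=
  natDegree_prod_Icc_le (fun j => by unfold wA; compute_degree) n

lemma natDegree_piB_le (α : ℕ → ℂ) (n : ℕ) : (piB α n).natDegree ≤ n :=
  natDegree_prod_Icc_le (fun j => by unfold wB; split_ifs <;> compute_degree) n

lemma wB_eval_inv_conj' (α : ℕ → ℂ) (j : ℕ) {w : ℂ} (hw : w ≠ 0) :
    w * conj' ((wB α j).eval (conj' w)⁻¹) = negBeta α j * (wA α j).eval w := by
  rw [wB_eval, wA_eval, negBeta]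
  split_ifs with h
  · simp [h, conj', hw]
  · have hc : conj' (α j) ≠ 0 := by simpa [conj'] using h
    simp only [conj', map_sub, map_one, map_mul, map_inv₀, Complex.conj_conj] at hc ⊢
    field_simp
    ring

lemma pstar_piB (α : ℕ → ℂ) (n : ℕ) : pstar n (piB α n) = C (negBetaProd α n) * piA α n := by
  refine eq_of_infinite_eval_eq _ _ ((Set.finite_singleton 0).infinite_compl.mono fun w hw => ?_)
  have hw : w ≠ 0 := hw
  have hpow : w ^ n = ∏ _j ∈ Finset.Icc 1 n, w := by simp
  rw [Set.mem_ofPred_eq, pstar_eval (natDegree_piB_le α n) hw, eval_mul, eval_C, piB, piA,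
    eval_prod, eval_prod, conj', map_prod, negBetaProd, ← Finset.prod_mul_distrib, hpow,
    ← Finset.prod_mul_distrib]
  exact Finset.prod_congr rfl fun j _ => wB_eval_inv_conj' α j hw

lemma piB_eq_C_mul_pstar_piA (α : ℕ → ℂ) (n : ℕ) :
    piB α n = C (conj' (negBetaProd α n)) * pstar n (piA α n) := by
  rw [← pstar_C_mul, ← pstar_piB, pstar_pstar (natDegree_piB_le α n)]

lemma conj'_eval_div_piB (α : ℕ → ℂ) {n : ℕ} {p : ℂ[X]} (hp : p.natDegree ≤ n) {z : ℂ}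
    (hz : onT z) :
    conj' (p.eval z / (piB α n).eval z) =
      (C (negBetaProd α n)⁻¹ * pstar n p).eval z / (piA α n).eval z := by
  rw [conj'_eval_div_eval_of_onT hp (natDegree_piB_le α n) hz, pstar_piB]
  simp only [eval_mul, eval_C]
  ring

lemma conj'_eval_div_piA (α : ℕ → ℂ) {n : ℕ} {p : ℂ[X]} (hp : p.natDegree ≤ n) {z : ℂ}
    (hz : onT z) :
    conj' (p.eval z / (piA α n).eval z) =
      (C (conj' (negBetaProd α n)) * pstar n p).eval z / (piB α n).eval z := by
  have hK : conj' (negBetaProd α n) ≠ 0 := by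
    simpa [conj'] using negBetaProd_ne_zero α n
  rw [conj'_eval_div_eval_of_onT hp (natDegree_piA_le α n) hz, piB_eq_C_mul_pstar_piA]
  simp only [eval_mul, eval_C, mul_div_mul_left _ _ hK]

lemma zetaA_mul_wA {α : ℕ → ℂ} (hα : ∀ j, ‖α j‖ < 1) (j : ℕ) {z : ℂ} (hz : onT z) :
    zetaA α j z * (wA α j).eval z = sig α j * z * conj' ((wA α j).eval z) := by
  have hw := wA_eval_ne_zero hα j (le_of_eq hz)
  rw [wA_eval] at hw ⊢
  unfold zetaA
  split_ifs with h
  · simp [h, sig, conj']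
  · rw [div_mul_cancel₀ _ hw]
    simp only [conj', map_sub, map_one, map_mul, Complex.conj_conj]
    rw [← conj', conj'_eq_inv_of_onT hz]
    field_simp [onT_ne_zero hz]

lemma zetaB_mul_wB {α : ℕ → ℂ} (hα : ∀ j, ‖α j‖ < 1) (j : ℕ) {z : ℂ} (hz : onT z) :
    zetaB α j z * (wB α j).eval z = sig α j * z * conj' ((wB α j).eval z) := by
  have hw := wB_eval_ne_zero hα j (ge_of_eq hz)
  have hz0 := onT_ne_zero hz
  rw [wB_eval] at hw ⊢
  unfold zetaB
  split_ifs at hw ⊢ with h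
  · simp only [sig, h, if_true, conj', map_neg]
    rw [← conj', conj'_eq_inv_of_onT hz]
    field_simp
  · rw [show (1 : ℂ) - z / α j = 1 - (α j)⁻¹ * z by ring, div_mul_cancel₀ _ hw]
    simp only [conj', map_sub, map_one, map_mul, map_inv₀]
    rw [← conj', ← conj', conj'_eq_inv_of_onT hz]
    have hc : conj' (α j) ≠ 0 := by simpa [conj'] using h
    field_simp

lemma sig_mul_sig {α : ℕ → ℂ} {j : ℕ} (h : α j ≠ 0) :
    sig α j * sig α j * α j = conj' (α j) := by
  have hn : ((‖α j‖ : ℝ) : ℂ) ≠ 0 := by simpa using h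
  have hsq : α j * conj' (α j) = ((‖α j‖ : ℝ) : ℂ) ^ 2 := by
    simpa [conj'] using Complex.mul_conj' (α j)
  rw [sig, if_neg h]
  field_simp
  linear_combination conj' (α j) * hsq

lemma zetaA_mul_zetaB {α : ℕ → ℂ} (hα : ∀ j, ‖α j‖ < 1) (j : ℕ) {z : ℂ} (hz : onT z) :
    zetaA α j z * zetaB α j z = 1 := by
  have hz0 := onT_ne_zero hz
  unfold zetaA zetaB
  split_ifs with h
  · exact mul_inv_cancel₀ hz0
  · have hA := wA_eval_ne_zero hα j (le_of_eq hz)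
    have hB := wB_eval_ne_zero hα j (ge_of_eq hz)
    rw [wA_eval] at hA
    rw [wB_eval, if_neg h] at hB
    have hB' : 1 - z / α j ≠ 0 := by rwa [div_eq_inv_mul]
    have hc : conj' (α j) ≠ 0 := by simpa [conj'] using h
    rw [div_mul_div_comm, div_eq_one_iff_eq (mul_ne_zero hA hB')]
    field_simp
    linear_combination (z - α j) * (z * conj' (α j) - 1) * sig_mul_sig h

lemma prod_mul_prod_of_mul_eq_mul_conj' {s : Finset ℕ} {ζ w σ : ℕ → ℂ} {z : ℂ}
    (h : ∀ j ∈ s, ζ j * w j = σ j * z * conj' (w j)) :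
    (∏ j ∈ s, ζ j) * ∏ j ∈ s, w j = (∏ j ∈ s, σ j) * z ^ s.card * conj' (∏ j ∈ s, w j) := by
  rw [conj', map_prod, ← Finset.prod_const, ← Finset.prod_mul_distrib, ← Finset.prod_mul_distrib,
    ← Finset.prod_mul_distrib]
  exact Finset.prod_congr rfl h

lemma BA_mul_piA {α : ℕ → ℂ} (hα : ∀ j, ‖α j‖ < 1) (n : ℕ) {z : ℂ} (hz : onT z) :
    BA α n z * (piA α n).eval z = sigProd α n * z ^ n * conj' ((piA α n).eval z) := by
  simpa [BA, piA, sigProd, eval_prod] using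
    prod_mul_prod_of_mul_eq_mul_conj' fun j (_ : j ∈ Finset.Icc 1 n) => zetaA_mul_wA hα j hz

lemma BB_mul_piB {α : ℕ → ℂ} (hα : ∀ j, ‖α j‖ < 1) (n : ℕ) {z : ℂ} (hz : onT z) :
    BB α n z * (piB α n).eval z = sigProd α n * z ^ n * conj' ((piB α n).eval z) := by
  simpa [BB, piB, sigProd, eval_prod] using
    prod_mul_prod_of_mul_eq_mul_conj' fun j (_ : j ∈ Finset.Icc 1 n) => zetaB_mul_wB hα j hz

lemma prod_mul_prod_filter_not_eq {s : Finset ℕ} (P : ℕ → Prop) [DecidablePred P]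
    {f g : ℕ → ℂ} (h : ∀ j ∈ s, ¬ P j → f j * g j = 1) :
    (∏ j ∈ s, f j) * ∏ j ∈ s with ¬ P j, g j = ∏ j ∈ s with P j, f j := by
  rw [← Finset.prod_filter_mul_prod_filter_not s P, mul_assoc, ← Finset.prod_mul_distrib,
    Finset.prod_eq_one fun j hj => h j (Finset.mem_filter.mp hj).1 (Finset.mem_filter.mp hj).2,
    mul_one]

lemma BA_mul_BcB {α : ℕ → ℂ} (hα : ∀ j, ‖α j‖ < 1) (c : ℕ → Bool) (n : ℕ) {z : ℂ}
    (hz : onT z) : BA α n z * BcB α c n z = BcA α c n z := by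
  have h := prod_mul_prod_filter_not_eq (s := Finset.Icc 1 n) (fun j => c j = true)
    (f := fun j => zetaA α j z) (g := fun j => zetaG α c j z) fun j _ hj => by
      simpa [zetaG, hj] using zetaA_mul_zetaB hα j hz
  simp only [Bool.not_eq_true] at h
  rw [BA, BcB, bSet, h, BcA, aSet]
  exact Finset.prod_congr rfl fun j hj => by simp [zetaG, (Finset.mem_filter.mp hj).2]

lemma BB_mul_BcA {α : ℕ → ℂ} (hα : ∀ j, ‖α j‖ < 1) (c : ℕ → Bool) (n : ℕ) {z : ℂ}
    (hz : onT z) : BB α n z * BcA α c n z = BcB α c n z := by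
  have h := prod_mul_prod_filter_not_eq (s := Finset.Icc 1 n) (fun j => c j = false)
    (f := fun j => zetaB α j z) (g := fun j => zetaG α c j z) fun j _ hj => by
      simpa [zetaG, hj, mul_comm] using zetaA_mul_zetaB hα j hz
  simp only [Bool.not_eq_false] at h
  rw [BB, BcA, aSet, h, BcB, bSet]
  exact Finset.prod_congr rfl fun j hj => by simp [zetaG, (Finset.mem_filter.mp hj).2]

lemma starF_eq_mul_conj' {α : ℕ → ℂ} {pip p : ℕ → ℂ[X]} {n : ℕ} (hp : (p n).natDegree ≤ n)
    {z B : ℂ} (hz : onT z) (hpip : (pip n).eval z ≠ 0)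
    (hB : B * (pip n).eval z = sigProd α n * z ^ n * conj' ((pip n).eval z)) :
    starF α pip p n z = B * conj' ((p n).eval z / (pip n).eval z) := by
  have hpip' : conj' ((pip n).eval z) ≠ 0 := by simpa [conj'] using hpip
  rw [← eq_div_iff hpip] at hB
  rw [starF, pstar_eval_onT hp hz, hB]
  simp only [conj', map_div₀] at hpip' ⊢
  field_simp

lemma eq_zero_and_norm_eq_one_of_eq_smul_add {𝕜 E : Type*} [RCLike 𝕜] [NormedAddCommGroup E]
    [InnerProductSpace 𝕜 E] {u v w : E} {c : 𝕜} (h : u = c • v + w)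
    (hu : inner 𝕜 u u = 1) (hv : inner 𝕜 v v = 1) (hvw : inner 𝕜 v w = 0)
    (huw : inner 𝕜 u w = 0) : w = 0 ∧ ‖c‖ = 1 := by
  have hw : w = 0 := by
    rw [← inner_self_eq_zero (𝕜 := 𝕜)]
    nth_rewrite 1 [eq_sub_of_add_eq' h.symm]
    rw [inner_sub_left, inner_smul_left, huw, hvw, mul_zero, sub_zero]
  refine ⟨hw, ?_⟩
  rw [hw, add_zero] at h
  rw [h, inner_smul_left, inner_smul_right, hv, mul_one, RCLike.conj_mul] at hu
  exact (pow_eq_one_iff_of_nonneg (norm_nonneg c) two_ne_zero).mp (by exact_mod_cast hu)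

namespace CircleMeasure

variable {μ : Measure ℂ}

lemma ae_onT (hμ : CircleMeasure μ) : ∀ᵐ z ∂μ, onT z := ae_iff.mpr hμ.circ

lemma memLp_eval_div (hμ : CircleMeasure μ) {P Q : ℂ[X]} (hQ : ∀ z, onT z → Q.eval z ≠ 0) :
    MemLp (fun z => P.eval z / Q.eval z) 2 μ := by
  have := hμ.prob
  have hcont : ContinuousOn (fun z => P.eval z / Q.eval z) (Metric.sphere 0 1) :=
    P.continuous.continuousOn.div Q.continuous.continuousOn fun z hz =>
      hQ z (by simpa [onT] using hz)
  obtain ⟨M, hM⟩ := (isCompact_sphere (0 : ℂ) 1).exists_bound_of_continuousOn hcont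
  exact MemLp.of_bound (P.continuous.measurable.div Q.continuous.measurable).aestronglyMeasurable
    M (hμ.ae_onT.mono fun z hz => hM z (by simpa [onT] using hz))

lemma inn_eq_conj' (hμ : CircleMeasure μ) {f f' g g' : ℂ → ℂ}
    (hf : ∀ z, onT z → f z = conj' (f' z)) (hg : ∀ z, onT z → g z = conj' (g' z)) :
    inn μ f g = conj' (inn μ f' g') := by
  rw [inn, inn, conj', ← integral_conj]
  exact integral_congr_ae (hμ.ae_onT.mono fun z hz => by simp [hf z hz, hg z hz, conj'])

lemma eq_zero_of_ae_eval_eq_zero (hμ : CircleMeasure μ) {P : ℂ[X]}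
    (hP : ∀ᵐ z ∂μ, P.eval z = 0) : P = 0 := by
  by_contra hP0
  have hT : (Metric.sphere (0 : ℂ) 1).Infinite :=
    (isPreconnected_sphere (by simp) 0 1).infinite_of_nontrivial
      ⟨1, by simp, -1, by simp, by norm_num⟩
  obtain ⟨z, hzT, hz⟩ := (hT.sdiff (finite_setOfPred_isRoot hP0)).nonempty
  have hpos := hμ.pos {z | P.eval z ≠ 0} (isOpen_ne_fun P.continuous continuous_const)
    ⟨z, hz, by simpa [onT] using hzT⟩
  exact hpos.ne' (ae_iff.mp hP)

end CircleMeasure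

lemma inn_eq_inner {μ : Measure ℂ} {f g : ℂ → ℂ} (hf : MemLp f 2 μ) (hg : MemLp g 2 μ) :
    inn μ f g = inner ℂ (hf.toLp f) (hg.toLp g) := by
  rw [L2.inner_def]
  refine integral_congr_ae ?_
  filter_upwards [hf.coeFn_toLp, hg.coeFn_toLp] with z hfz hgz
  rw [hfz, hgz, RCLike.inner_apply, mul_comm]
  rfl

lemma bEval_sub_C_mul (α : ℕ → ℂ) (m j : ℕ) (q p : ℂ[X]) (a : ℂ) :
    bEval α m j (q - C a * p) = bEval α m j q - a * bEval α m j p := by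
  unfold bEval
  split_ifs <;> simp

lemma bEval_C_mul (α : ℕ → ℂ) (m j : ℕ) (p : ℂ[X]) (a : ℂ) :
    bEval α m j (C a * p) = a * bEval α m j p := by
  unfold bEval
  split_ifs <;> simp

lemma bEval_div_bEval {α : ℕ → ℂ} {n : ℕ} (j : ℕ) {p q : ℂ[X]} (hp : p.natDegree ≤ n)
    (hq : q.natDegree ≤ n) :
    bEval α n j p / bEval α n j q = conj' ((pstar n p).eval (α j) / (pstar n q).eval (α j)) := by
  unfold bEval
  split_ifs with h
  · simp [h, pstar_eval_zero, conj']
  · simp [pstar_eval hp h, pstar_eval hq h, mul_div_mul_left _ _ (pow_ne_zero n h), conj']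

lemma exists_eq_mul_wA_of_bEval_eq_zero {α : ℕ → ℂ} {m : ℕ} {q : ℂ[X]}
    (hq : q.natDegree ≤ m + 1) (h : bEval α (m + 1) (m + 1) q = 0) :
    ∃ s : ℂ[X], s.natDegree ≤ m ∧ q = s * wA α (m + 1) := by
  unfold bEval at h
  split_ifs at h with h0
  · refine ⟨q, natDegree_le_iff_coeff_eq_zero.mpr fun k hk => ?_, by simp [wA, h0, conj']⟩
    obtain rfl | hk' := eq_or_lt_of_le (Nat.succ_le_of_lt (by exact_mod_cast hk))
    · exact h
    · exact coeff_eq_zero_of_natDegree_lt (hq.trans_lt hk')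
  · set a := conj' (α (m + 1)) with ha_def
    have ha : a ≠ 0 := by simpa [a, conj'] using h0
    have hw : wA α (m + 1) = C (-a) * (X - C a⁻¹) := by
      rw [wA, ← ha_def, mul_sub, ← C_mul, neg_mul, mul_inv_cancel₀ ha, C_neg, C_neg, C_1]
      ring
    refine ⟨C (-a)⁻¹ * (q /ₘ (X - C a⁻¹)), (natDegree_C_mul_le _ _).trans ?_, ?_⟩
    · rw [natDegree_divByMonic _ (monic_X_sub_C _), natDegree_X_sub_C]
      omega
    · rw [hw, show C (-a)⁻¹ * (q /ₘ (X - C a⁻¹)) * (C (-a) * (X - C a⁻¹)) =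
          C ((-a)⁻¹ * -a) * ((X - C a⁻¹) * (q /ₘ (X - C a⁻¹))) by rw [C_mul]; ring,
        inv_mul_cancel₀ (neg_ne_zero.mpr ha), C_1, one_mul, mul_divByMonic_eq_iff_isRoot.mpr h]

theorem IsORF.exists_eq_C_mul_of_orthogonal {μ : Measure ℂ} (hμ : CircleMeasure μ)
    {α : ℕ → ℂ} (hα : ∀ j, ‖α j‖ < 1) {φ : ℕ → ℂ → ℂ} {p : ℕ → ℂ[X]}
    (hA : IsORF μ (piA α) φ p) {m : ℕ} {q : ℂ[X]} (hq : q.natDegree ≤ m + 1)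
    (horth : ∀ f ∈ Lsp (piA α) m, inn μ (fun z => q.eval z / (piA α (m + 1)).eval z) f = 0)
    (hnorm : inn μ (fun z => q.eval z / (piA α (m + 1)).eval z)
      (fun z => q.eval z / (piA α (m + 1)).eval z) = 1) :
    ∃ c : ℂ, ‖c‖ = 1 ∧ q = C c * p (m + 1) := by
  have hpiA : ∀ k z, onT z → (piA α k).eval z ≠ 0 := fun k z hz =>
    piA_eval_ne_zero hα k (le_of_eq hz)
  have hdiv : ∀ (s : ℂ[X]) z, onT z →
      (s * wA α (m + 1)).eval z / (piA α (m + 1)).eval z = s.eval z / (piA α m).eval z :=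
    fun s z hz => by
      rw [piA_succ, eval_mul, eval_mul,
        mul_div_mul_right _ _ (wA_eval_ne_zero hα _ (le_of_eq hz))]
  have hℓ : bEval α (m + 1) (m + 1) (p (m + 1)) ≠ 0 := by
    intro h0
    obtain ⟨s, hs, hps⟩ := exists_eq_mul_wA_of_bEval_eq_zero (hA.deg _) h0
    exact hA.notmem (m + 1) (Nat.le_add_left 1 m)
      ⟨s, hs, fun z hz => by rw [hA.rep, hps, hdiv s z hz]; rfl⟩
  set c := bEval α (m + 1) (m + 1) q / bEval α (m + 1) (m + 1) (p (m + 1))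
  obtain ⟨s, hs, hqs⟩ := exists_eq_mul_wA_of_bEval_eq_zero (q := q - C c * p (m + 1))
    ((natDegree_sub_le _ _).trans (max_le hq ((natDegree_C_mul_le _ _).trans (hA.deg _))))
    (by rw [bEval_sub_C_mul, div_mul_cancel₀ _ hℓ, sub_self])
  set g := fun z => q.eval z / (piA α (m + 1)).eval z
  set h := fun z => s.eval z / (piA α m).eval z
  have hhmem : h ∈ Lsp (piA α) m := ⟨s, hs, fun _ _ => rfl⟩
  have hφ : φ (m + 1) = fun z => (p (m + 1)).eval z / (piA α (m + 1)).eval z :=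
    funext (hA.rep _)
  have hg2 : MemLp g 2 μ := hμ.memLp_eval_div (hpiA _)
  have hφ2 : MemLp (φ (m + 1)) 2 μ := hφ ▸ hμ.memLp_eval_div (hpiA _)
  have hh2 : MemLp h 2 μ := hμ.memLp_eval_div (hpiA _)
  have hdecomp : hg2.toLp g = c • hφ2.toLp (φ (m + 1)) + hh2.toLp h := by
    rw [← MemLp.toLp_const_smul, ← MemLp.toLp_add]
    refine MemLp.toLp_congr _ _ (hμ.ae_onT.mono fun z hz => ?_)
    simp only [g, h, hφ, Pi.add_apply, Pi.smul_apply, smul_eq_mul]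
    rw [eq_add_of_sub_eq' hqs, eval_add, add_div, hdiv s z hz, eval_mul, eval_C, mul_div_assoc]
  obtain ⟨hh0, hc⟩ := eq_zero_and_norm_eq_one_of_eq_smul_add hdecomp
    (by rw [← inn_eq_inner]; exact hnorm) (by rw [← inn_eq_inner]; exact hA.norm _)
    (by rw [← inn_eq_inner]; exact hA.orth _ (Nat.le_add_left 1 m) h hhmem)
    (by rw [← inn_eq_inner]; exact horth h hhmem)
  have hs0 : s = 0 := hμ.eq_zero_of_ae_eval_eq_zero <| by
    filter_upwards [Lp.eq_zero_iff_ae_eq_zero.mp hh0, hh2.coeFn_toLp, hμ.ae_onT]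
      with z h0 hhz hz
    simpa [h, hpiA m z hz] using hhz.symm.trans h0
  exact ⟨c, hc, by rwa [hs0, zero_mul, sub_eq_zero] at hqs⟩

lemma normB_iff {α : ℕ → ℂ} {p : ℕ → ℂ[X]} {n : ℕ} :
    normB α p n ↔
      posR (sigProd α n * bEval α n n (pstar n (p n)) / bEval α n n (piB α n)) := by
  unfold normB bEval
  split_ifs <;> rfl

lemma conj'_sigProd_mul_negBetaProd (α : ℕ → ℂ) (n : ℕ) :
    conj' (sigProd α n * negBetaProd α n) = sigProd α n * negBetaProd α n := by
  rw [sigProd, negBetaProd, ← Finset.prod_mul_distrib, conj', map_prod]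
  refine Finset.prod_congr rfl fun j _ => ?_
  unfold sig negBeta
  split_ifs with h
  · simp
  · have hn : ((‖α j‖ : ℝ) : ℂ) ≠ 0 := by simpa using h
    have hc : conj' (α j) ≠ 0 := by simpa [conj'] using h
    simp only [conj', map_mul, map_div₀, map_neg, map_inv₀, Complex.conj_conj,
      Complex.conj_ofReal] at hc ⊢
    field_simp

lemma eq_one_of_posR_mul_conj' {c x : ℂ} (hc : ‖c‖ = 1) (hx : posR x)
    (hcx : posR (c * conj' x)) : c = 1 := by
  obtain ⟨hxre, hxim⟩ := hx
  obtain ⟨hre, him⟩ := hcx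
  simp only [conj', Complex.mul_re, Complex.mul_im, Complex.conj_re, Complex.conj_im, hxim,
    neg_zero, mul_zero, sub_zero] at hre him
  have hcim : c.im = 0 := by simpa [hxre.ne'] using him
  have hcre : 0 < c.re := pos_of_mul_pos_left hre hxre.le
  have hcre' : c = c.re := Complex.ext rfl (by simp [hcim])
  rw [hcre', Complex.norm_real, Real.norm_eq_abs, abs_of_pos hcre] at hc
  rw [hcre', hc, Complex.ofReal_one]

lemma eq_one_of_normA_of_normB {α : ℕ → ℂ} {pA pB : ℕ → ℂ[X]} {n : ℕ}
    (hpA : (pA n).natDegree ≤ n) {c : ℂ} (hc : ‖c‖ = 1)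
    (h : C (negBetaProd α n)⁻¹ * pstar n (pB n) = C c * pA n)
    (hnA : normA α pA n) (hnB : normB α pB n) : c = 1 := by
  have hK := negBetaProd_ne_zero α n
  have hK' : conj' (negBetaProd α n) ≠ 0 := by simpa [conj'] using hK
  have hpB : pstar n (pB n) = C (negBetaProd α n * c) * pA n := by
    rw [C_mul, mul_assoc, ← h, ← mul_assoc, ← C_mul, mul_inv_cancel₀ hK, C_1, one_mul]
  have hdiv := bEval_div_bEval (α := α) n hpA (pstar_natDegree_le n (piA α n))
  rw [pstar_pstar (natDegree_piA_le α n)] at hdiv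
  have hreal :
      sigProd α n * negBetaProd α n / conj' (negBetaProd α n) = conj' (sigProd α n) := by
    rw [div_eq_iff hK', ← conj'_sigProd_mul_negBetaProd, conj', map_mul]
    rfl
  -- the quantity normalized by `normB` is `c` times the conjugate of the one in `normA`
  rw [normB_iff, hpB, piB_eq_C_mul_pstar_piA, bEval_C_mul, bEval_C_mul,
    show ∀ a b c d e : ℂ, a * (b * c * d) / (conj' b * e) = c * (a * b / conj' b) * (d / e) by
      intros; ring, hreal, hdiv] at hnB
  refine eq_one_of_posR_mul_conj' hc hnA ?_
  convert hnB using 1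
  simp only [conj', map_mul, map_div₀]
  ring

theorem IsORF.inn_eq_zero_of_eq_conj' {μ : Measure ℂ} (hμ : CircleMeasure μ) {α : ℕ → ℂ}
    {φB : ℕ → ℂ → ℂ} {pB : ℕ → ℂ[X]} (hB : IsORF μ (piB α) φB pB) {m : ℕ} {g : ℂ → ℂ}
    (hg : ∀ z, onT z → g z = conj' (φB (m + 1) z)) : ∀ f ∈ Lsp (piA α) m, inn μ g f = 0 := by
  rintro f ⟨r, hr, hf⟩
  have hf' : ∀ z, onT z → f z = conj' ((C (conj' (negBetaProd α m)) * pstar m r).eval z /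
      (piB α m).eval z) := fun z hz => by
    rw [hf z hz, ← conj'_eval_div_piA α hr hz]
    simp [conj']
  have hmem : (fun z => (C (conj' (negBetaProd α m)) * pstar m r).eval z /
      (piB α m).eval z) ∈ Lsp (piB α) m :=
    ⟨_, (natDegree_C_mul_le _ _).trans (pstar_natDegree_le _ _), fun _ _ => rfl⟩
  rw [hμ.inn_eq_conj' hg hf', hB.orth _ (Nat.le_add_left 1 m) _ hmem, conj', map_zero]

theorem IsORF.eq_conj'_of_normalized {μ : Measure ℂ} (hμ : CircleMeasure μ) {α : ℕ → ℂ}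
    (hα : ∀ j, ‖α j‖ < 1) {φA φB : ℕ → ℂ → ℂ} {pA pB : ℕ → ℂ[X]}
    (hA : IsORF μ (piA α) φA pA) (hB : IsORF μ (piB α) φB pB)
    {n : ℕ} (hnA : normA α pA n) (hnB : normB α pB n) {z : ℂ} (hz : onT z) :
    φA n z = conj' (φB n z) := by
  suffices hnum : C (negBetaProd α n)⁻¹ * pstar n (pB n) = pA n by
    rw [hB.rep, conj'_eval_div_piB α (hB.deg n) hz, hnum, hA.rep]
  cases n with
  | zero => simp [hA.p0, hB.p0, negBetaProd, pstar, conj']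
  | succ m =>
    have hg : ∀ z, onT z → (C (negBetaProd α (m + 1))⁻¹ * pstar (m + 1) (pB (m + 1))).eval z /
        (piA α (m + 1)).eval z = conj' (φB (m + 1) z) := fun z hz => by
      rw [hB.rep, conj'_eval_div_piB α (hB.deg _) hz]
    obtain ⟨c, hc, hq⟩ := hA.exists_eq_C_mul_of_orthogonal hμ hα
      ((natDegree_C_mul_le _ _).trans (pstar_natDegree_le _ _)) (hB.inn_eq_zero_of_eq_conj' hμ hg)
      (by rw [hμ.inn_eq_conj' hg hg, hB.norm, conj', map_one])
    rw [hq, eq_one_of_normA_of_normB (hA.deg _) hc hq hnA hnB, C_1, one_mul]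

end ORF

open ORF MeasureTheory

theorem stmt3_general (α : ℕ → ℂ) (hα : ∀ j, ‖α j‖ < 1)
    (c : ℕ → Bool) (μ : Measure ℂ) (hμ : CircleMeasure μ)
    (φA φB : ℕ → ℂ → ℂ) (pA pB : ℕ → Polynomial ℂ)
    (hA : IsORF μ (piA α) φA pA) (hB : IsORF μ (piB α) φB pB)
    (hnA : ∀ n, normA α pA n) (hnB : ∀ n, normB α pB n)
    (n : ℕ) :
    (∀ z, onT z → φA n z = substar (φB n) z) ∧
    (∀ z, onT z → starF α (piA α) pA n z * BcB α c n z = φB n z * BcA α c n z) ∧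
    (∀ z, onT z → starF α (piB α) pB n z * BcA α c n z = φA n z * BcB α c n z) := by
  have hAB : ∀ z, onT z → φA n z = conj' (φB n z) :=
    fun z hz => hA.eq_conj'_of_normalized hμ hα hB (hnA n) (hnB n) hz
  have hBA : ∀ z, onT z → φB n z = conj' (φA n z) := fun z hz => by
    rw [hAB z hz]
    simp [conj']
  refine ⟨fun z hz => ?_, fun z hz => ?_, fun z hz => ?_⟩
  · simp only [substar, inv_conj'_of_onT hz, hAB z hz]
  · rw [starF_eq_mul_conj' (hA.deg n) hz (piA_eval_ne_zero hα n (le_of_eq hz))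
      (BA_mul_piA hα n hz), ← hA.rep, ← hBA z hz, mul_comm (BA α n z), mul_assoc,
      BA_mul_BcB hα c n hz]
  · rw [starF_eq_mul_conj' (hB.deg n) hz (piB_eval_ne_zero hα n (ge_of_eq hz))
      (BB_mul_piB hα n hz), ← hB.rep, ← hAB z hz, mul_comm (BB α n z), mul_assoc,
      BB_mul_BcA hα c n hz]

/-- Lemma 5: with the stated normalization, for all n ≥ 0,
φ_n^α = (φ_n^β)_*, (φ_n^α)^*·B̌_n^β = φ_n^β·B̌_n^α and (φ_n^β)^*·B̌_n^α = φ_n^α·B̌_n^β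
(as functions on the unit circle). -/
theorem stmt3 (α : ℕ → ℂ) (hα0 : α 0 = 0) (hα : ∀ j, ‖α j‖ < 1)
    (c : ℕ → Bool) (μ : Measure ℂ) (hμ : CircleMeasure μ)
    (φA φB : ℕ → ℂ → ℂ) (pA pB : ℕ → Polynomial ℂ)
    (hA : IsORF μ (piA α) φA pA) (hB : IsORF μ (piB α) φB pB)
    (hnA : ∀ n, normA α pA n) (hnB : ∀ n, normB α pB n)
    (n : ℕ) :
    (∀ z, onT z → φA n z = substar (φB n) z) ∧
    (∀ z, onT z → starF α (piA α) pA n z * BcB α c n z = φB n z * BcA α c n z) ∧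
    (∀ z, onT z → starF α (piB α) pB n z * BcA α c n z = φA n z * BcB α c n z) :=
  stmt3_general α hα c μ hμ φA φB pA pB hA hB hnA hnB n
end
end

section
/- For every n ≥ 0, every ν ∈ {α, β, γ}, and all z, w ∈ ℂ not on 𝕋, not among the poles of φ_n^ν or φ_{n+1}^ν, and such that the denominators below are nonzero, the Christoffel–Darboux relations hold: k_n^ν(z, w) = [φ_n^{ν*}(z)·conj(φ_n^{ν*}(w)) − ζ_n^ν(z)·conj(ζ_n^ν(w))·φ_n^ν(z)·conj(φ_n^ν(w))] / (1 − ζ_n^ν(z)·conj(ζ_n^ν(w))) = [φ_{n+1}^{ν*}(z)·conj(φ_{n+1}^{ν*}(w)) − φ_{n+1}^ν(z)·conj(φ_{n+1}^ν(w))] / (1 − ζ_{n+1}^ν(z)·conj(ζ_{n+1}^ν(w))). -/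
noncomputable section
open MeasureTheory
open scoped Classical

/-!
Both identities follow from `k_{n+1} = k_n + φ_{n+1}(z) conj(φ_{n+1}(w))` and the recursion
`k_{n+1}(z,w) = φ*_{n+1}(z) conj(φ*_{n+1}(w)) + ζ_{n+1}(z) conj(ζ_{n+1}(w)) k_n(z,w)`.
For the recursion, note that on `𝕋` we have `|ζ_j| = 1` and `φ*_m = B_m (φ_m)_*` with `|B_m| = 1`,
so `φ*_{n+1}, ζ_{n+1} φ_0, …, ζ_{n+1} φ_n` is a second orthonormal basis of `L_{n+1}`. Writing
everything over the common denominator `π_{n+1}`, both bases become orthonormal families of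
polynomials of degree `≤ n + 1` for one sesquilinear form, and `∑ f_i(z) conj(f_i(w))` is the same
for any two such families of full length.
-/

namespace LinearMap

open Module

variable {V ι κ : Type*} [AddCommGroup V] [Module ℂ V] [Fintype ι] [DecidableEq ι]
  [Fintype κ] [DecidableEq κ] {B : V →ₗ⋆[ℂ] V →ₗ[ℂ] ℂ} {u : ι → V}

theorem apply_sum_smul_left_of_orthonormal
    (hu : ∀ i j, B (u i) (u j) = if i = j then 1 else 0) (a : ι → ℂ) (j : ι) :
    B (∑ i, a i • u i) (u j) = star (a j) := by
  simp [map_sum, hu]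

theorem apply_sum_smul_right_of_orthonormal
    (hu : ∀ i j, B (u i) (u j) = if i = j then 1 else 0) (a : ι → ℂ) (j : ι) :
    B (u j) (∑ i, a i • u i) = a j := by
  simp [map_sum, hu]

theorem exists_eq_sum_smul_of_orthonormal [FiniteDimensional ℂ V]
    (hu : ∀ i j, B (u i) (u j) = if i = j then 1 else 0) (hcard : Fintype.card ι = finrank ℂ V)
    (x : V) : ∃ a : ι → ℂ, ∑ i, a i • u i = x := by
  have hli : LinearIndependent ℂ u :=
    linearIndependent_of_isOrthoᵢ (B := B) (fun i j hij => by rw [Function.onFun, hu, if_neg hij])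
      (fun i => by simp [hu])
  have hx : x ∈ Submodule.span ℂ (Set.range u) := by
    rw [hli.span_eq_top_of_card_eq_finrank' hcard]; trivial
  exact (Submodule.mem_span_range_iff_exists_fun ℂ).1 hx

theorem sum_apply_smul_of_orthonormal [FiniteDimensional ℂ V]
    (hu : ∀ i j, B (u i) (u j) = if i = j then 1 else 0) (hcard : Fintype.card ι = finrank ℂ V)
    (x : V) : ∑ i, B (u i) x • u i = x := by
  obtain ⟨a, rfl⟩ := exists_eq_sum_smul_of_orthonormal hu hcard x
  simp only [apply_sum_smul_right_of_orthonormal hu]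

theorem eq_of_apply_orthonormal_eq [FiniteDimensional ℂ V]
    (hu : ∀ i j, B (u i) (u j) = if i = j then 1 else 0) (hcard : Fintype.card ι = finrank ℂ V)
    {x y : V} (h : ∀ i, B x (u i) = B y (u i)) : x = y := by
  obtain ⟨a, rfl⟩ := exists_eq_sum_smul_of_orthonormal hu hcard x
  obtain ⟨b, rfl⟩ := exists_eq_sum_smul_of_orthonormal hu hcard y
  have hab : a = b := funext fun i => by
    have hi := h i
    rw [apply_sum_smul_left_of_orthonormal hu, apply_sum_smul_left_of_orthonormal hu] at hi
    exact star_injective hi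
  rw [hab]

theorem apply_sum_star_smul_of_orthonormal [FiniteDimensional ℂ V]
    (hu : ∀ i j, B (u i) (u j) = if i = j then 1 else 0) (hcard : Fintype.card ι = finrank ℂ V)
    (g : V →ₗ[ℂ] ℂ) (x : V) : B (∑ i, star (g (u i)) • u i) x = g x := by
  conv_rhs => rw [← sum_apply_smul_of_orthonormal hu hcard x]
  simp [map_sum, mul_comm]

theorem sum_mul_star_eq_of_orthonormal [FiniteDimensional ℂ V] {v : κ → V}
    (hu : ∀ i j, B (u i) (u j) = if i = j then 1 else 0)
    (hv : ∀ i j, B (v i) (v j) = if i = j then 1 else 0)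
    (hcard_u : Fintype.card ι = finrank ℂ V) (hcard_v : Fintype.card κ = finrank ℂ V)
    (f g : V →ₗ[ℂ] ℂ) :
    ∑ i, f (v i) * star (g (v i)) = ∑ i, f (u i) * star (g (u i)) := by
  -- both sides are `f` applied to the `B`-representer of `g`, which is unique
  have hrep : ∑ i, star (g (v i)) • v i = ∑ i, star (g (u i)) • u i :=
    eq_of_apply_orthonormal_eq hu hcard_u fun i => by
      rw [apply_sum_star_smul_of_orthonormal hv hcard_v,
        apply_sum_star_smul_of_orthonormal hu hcard_u]
  simpa [map_sum, mul_comm] using congrArg f hrep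

end LinearMap

namespace Polynomial

variable {ι κ : Type*} [Fintype ι] [DecidableEq ι] [Fintype κ] [DecidableEq κ]

theorem sum_eval_mul_conj_eq_of_orthonormal (B : ℂ[X] →ₗ⋆[ℂ] ℂ[X] →ₗ[ℂ] ℂ) {M : ℕ}
    {u : ι → ℂ[X]} {v : κ → ℂ[X]}
    (hu : ∀ i j, B (u i) (u j) = if i = j then 1 else 0)
    (hv : ∀ i j, B (v i) (v j) = if i = j then 1 else 0)
    (hu_deg : ∀ i, (u i).natDegree ≤ M) (hv_deg : ∀ i, (v i).natDegree ≤ M)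
    (hcard_u : Fintype.card ι = M + 1) (hcard_v : Fintype.card κ = M + 1) (z w : ℂ) :
    ∑ i, (v i).eval z * starRingEnd ℂ ((v i).eval w) =
      ∑ i, (u i).eval z * starRingEnd ℂ ((u i).eval w) := by
  set W := degreeLT ℂ (M + 1)
  have hmem {q : ℂ[X]} (hq : q.natDegree ≤ M) : q ∈ W :=
    mem_degreeLT.2 (degree_le_natDegree.trans_lt (by exact_mod_cast Nat.lt_succ_of_le hq))
  have : FiniteDimensional ℂ W := (degreeLTEquiv ℂ (M + 1)).symm.finiteDimensional
  have hrank : Module.finrank ℂ W = M + 1 := by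
    rw [(degreeLTEquiv ℂ (M + 1)).finrank_eq, Module.finrank_fin_fun]
  exact LinearMap.sum_mul_star_eq_of_orthonormal (B := B.domRestrict₁₂ W W)
    (u := fun i => ⟨u i, hmem (hu_deg i)⟩) (v := fun i => ⟨v i, hmem (hv_deg i)⟩)
    hu hv (hcard_u.trans hrank.symm) (hcard_v.trans hrank.symm)
    ((leval z).domRestrict W) ((leval w).domRestrict W)

end Polynomial

namespace ORF

open Polynomial

variable {α : ℕ → ℂ} {c : ℕ → Bool} {μ : Measure ℂ} {φ : ℕ → ℂ → ℂ} {p : ℕ → ℂ[X]}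

lemma conj_mul_self_of_norm_eq_one {x : ℂ} (hx : ‖x‖ = 1) : conj' x * x = 1 := by
  rw [conj', Complex.conj_mul', hx]; simp

lemma mul_conj_div_mul_conj (a b c d : ℂ) :
    a * conj' b / (c * conj' d) = a / c * conj' (b / d) := by
  rw [conj', conj', conj', map_div₀, mul_div_mul_comm]

lemma conj_inn (μ : Measure ℂ) (f g : ℂ → ℂ) : conj' (inn μ f g) = inn μ g f := by
  unfold inn conj'
  rw [← integral_conj]
  simp_rw [map_mul, Complex.conj_conj, mul_comm]

lemma inn_congr_of_onT (hμT : μ {z | ¬ onT z} = 0) {f g f' g' : ℂ → ℂ}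
    (h : ∀ z, onT z → conj' (f z) * g z = conj' (f' z) * g' z) : inn μ f g = inn μ f' g' :=
  integral_congr_ae ((ae_iff.2 hμT).mono h)

lemma inn_congr_fun_of_onT (hμT : μ {z | ¬ onT z} = 0) {f g f' g' : ℂ → ℂ}
    (hf : ∀ z, onT z → f z = f' z) (hg : ∀ z, onT z → g z = g' z) : inn μ f g = inn μ f' g' :=
  inn_congr_of_onT hμT fun z hz => by rw [hf z hz, hg z hz]

lemma integrable_conj_div_mul_div [IsFiniteMeasure μ] (hμT : μ {z | ¬ onT z} = 0) {Q : ℂ[X]}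
    (hQ : ∀ z, onT z → Q.eval z ≠ 0) (q r : ℂ[X]) :
    Integrable (fun z => conj' (q.eval z / Q.eval z) * (r.eval z / Q.eval z)) μ := by
  have hQ' : ∀ z ∈ Metric.sphere (0 : ℂ) 1, Q.eval z ≠ 0 := fun z hz =>
    hQ z (mem_sphere_zero_iff_norm.1 hz)
  have hcont : ContinuousOn (fun z => conj' (q.eval z / Q.eval z) * (r.eval z / Q.eval z))
      (Metric.sphere 0 1) := by
    unfold conj'
    fun_prop (disch := assumption)
  have hae : ∀ᵐ z ∂μ, z ∈ Metric.sphere (0 : ℂ) 1 :=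
    (ae_iff.2 hμT).mono fun z hz => mem_sphere_zero_iff_norm.2 hz
  simpa [IntegrableOn, Measure.restrict_eq_self_of_ae_mem hae] using
    hcont.integrableOn_compact (μ := μ) (isCompact_sphere 0 1)

def gramForm (μ : Measure ℂ) [IsFiniteMeasure μ] (hμT : μ {z | ¬ onT z} = 0) (Q : ℂ[X])
    (hQ : ∀ z, onT z → Q.eval z ≠ 0) : ℂ[X] →ₗ⋆[ℂ] ℂ[X] →ₗ[ℂ] ℂ :=
  LinearMap.mk₂'ₛₗ (starRingEnd ℂ) (RingHom.id ℂ)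
    (fun q r => inn μ (fun z => q.eval z / Q.eval z) (fun z => r.eval z / Q.eval z))
    (fun q q' r => by
      simp only [inn, eval_add, add_div, conj', map_add, add_mul]
      exact integral_add (integrable_conj_div_mul_div hμT hQ q r)
        (integrable_conj_div_mul_div hμT hQ q' r))
    (fun a q r => by
      simp only [inn, eval_smul, smul_eq_mul, mul_div_assoc, conj', map_mul, mul_assoc]
      exact integral_const_mul _ _)
    (fun q r r' => by
      simp only [inn, eval_add, add_div, mul_add]
      exact integral_add (integrable_conj_div_mul_div hμT hQ q r)
        (integrable_conj_div_mul_div hμT hQ q r'))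
    (fun a q r => by
      simp only [inn, eval_smul, smul_eq_mul, mul_div_assoc, RingHom.id_apply, mul_left_comm _ a]
      exact integral_const_mul _ _)

lemma norm_sig (α : ℕ → ℂ) (j : ℕ) : ‖sig α j‖ = 1 := by
  unfold sig conj'
  split_ifs with h
  · exact norm_one
  · rw [norm_div, Complex.norm_conj, Complex.norm_real, Real.norm_of_nonneg (norm_nonneg _),
      div_self (norm_ne_zero_iff.2 h)]

lemma wG_eval_ne_zero_of_onT (hα : ∀ j, ‖α j‖ < 1) (j : ℕ) {z : ℂ} (hz : onT z) :
    (wG α c j).eval z ≠ 0 := by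
  have hα1 : ‖α j‖ ≠ 1 := (hα j).ne
  unfold wG wA wB onT conj' at *
  split_ifs with hc h0
  · rw [eval_sub, eval_one, eval_mul, eval_C, eval_X, sub_ne_zero]
    intro h
    apply hα1
    simpa [hz] using congrArg norm h.symm
  · simp [← norm_ne_zero_iff, hz]
  · rw [eval_sub, eval_one, eval_mul, eval_C, eval_X, sub_ne_zero]
    intro h
    apply hα1
    simpa [hz] using congrArg norm h.symm

lemma wstarG_eval_of_onT (j : ℕ) {z : ℂ} (hz : onT z) :
    (wstarG α c j).eval z = z * conj' ((wG α c j).eval z) := by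
  have hzz : z * starRingEnd ℂ z = 1 := by
    rw [mul_comm]; exact conj_mul_self_of_norm_eq_one hz
  unfold wstarG wG wA wB conj'
  split_ifs <;> simp only [eval_sub, eval_one, eval_mul, eval_C, eval_X, eval_neg, map_sub,
    map_one, map_mul, map_neg, map_inv₀, Complex.conj_conj]
  · linear_combination α j * hzz
  · linear_combination hzz
  · linear_combination (starRingEnd ℂ (α j))⁻¹ * hzz

lemma zetaG_eq_div (α : ℕ → ℂ) (c : ℕ → Bool) (j : ℕ) (z : ℂ) :
    zetaG α c j z = sig α j * (wstarG α c j).eval z / (wG α c j).eval z := by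
  unfold zetaG zetaA zetaB sig wstarG wG wA wB conj'
  split_ifs <;> simp only [eval_sub, eval_one, eval_mul, eval_C, eval_X, eval_neg]
  · simp [*]
  · rw [one_mul, neg_div_neg_eq, one_div]
  · rw [div_eq_inv_mul z]

lemma norm_zetaG_of_onT (hα : ∀ j, ‖α j‖ < 1) (j : ℕ) {z : ℂ} (hz : onT z) :
    ‖zetaG α c j z‖ = 1 := by
  rw [zetaG_eq_div, wstarG_eval_of_onT j hz, norm_div, norm_mul, norm_mul, norm_sig,
    show ‖z‖ = 1 from hz, conj', Complex.norm_conj, one_mul, one_mul,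
    div_self (norm_ne_zero_iff.2 (wG_eval_ne_zero_of_onT hα j hz))]

lemma natDegree_wG_le (α : ℕ → ℂ) (c : ℕ → Bool) (j : ℕ) : (wG α c j).natDegree ≤ 1 := by
  unfold wG wA wB
  split_ifs <;> compute_degree

lemma natDegree_wstarG_le (α : ℕ → ℂ) (c : ℕ → Bool) (j : ℕ) :
    (wstarG α c j).natDegree ≤ 1 := by
  unfold wstarG
  split_ifs <;> compute_degree!

lemma natDegree_pstar_le (m : ℕ) (q : ℂ[X]) : (pstar m q).natDegree ≤ m := by
  unfold pstar
  refine natDegree_sum_le_of_forall_le _ _ fun k _ => (natDegree_C_mul_le _ _).trans ?_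
  simp

lemma pstar_eval_of_onT {m : ℕ} {q : ℂ[X]} (hq : q.natDegree ≤ m) {z : ℂ} (hz : onT z) :
    (pstar m q).eval z = z ^ m * conj' (q.eval z) := by
  have hzz : z * starRingEnd ℂ z = 1 := by
    rw [mul_comm]; exact conj_mul_self_of_norm_eq_one hz
  rw [eval_eq_sum_range' (Nat.lt_succ_of_le hq), conj', map_sum, Finset.mul_sum]
  simp only [pstar, eval_finsetSum, eval_mul, eval_C, eval_pow, eval_X, map_mul, map_pow, conj']
  refine Finset.sum_congr rfl fun k hk => ?_
  have hkm : k ≤ m := Nat.lt_succ_iff.1 (Finset.mem_range.1 hk)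
  calc starRingEnd ℂ (q.coeff k) * z ^ (m - k)
      = starRingEnd ℂ (q.coeff k) * z ^ (m - k) * (z * starRingEnd ℂ z) ^ k := by
        rw [hzz, one_pow, mul_one]
    _ = z ^ (m - k + k) * (starRingEnd ℂ (q.coeff k) * starRingEnd ℂ z ^ k) := by ring
    _ = _ := by rw [Nat.sub_add_cancel hkm]

lemma piG_succ (α : ℕ → ℂ) (c : ℕ → Bool) (m : ℕ) :
    piG α c (m + 1) = piG α c m * wG α c (m + 1) :=
  Finset.prod_Icc_succ_top (by omega) _

lemma piG_eval_ne_zero_of_succ {m : ℕ} {z : ℂ} (h : (piG α c (m + 1)).eval z ≠ 0) :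
    (piG α c m).eval z ≠ 0 := by
  rw [piG_succ, eval_mul] at h
  exact left_ne_zero_of_mul h

lemma piG_eq_mul_tailProd (α : ℕ → ℂ) (c : ℕ → Bool) {k M : ℕ} (h : k ≤ M) :
    piG α c M = piG α c k * tailProd α c M k := by
  simpa only [piG, tailProd, ← Finset.Icc_add_one_left_eq_Ioc, zero_add] using
    (Finset.prod_Ioc_consecutive (wG α c) (Nat.zero_le k) h).symm

lemma piG_eval_ne_zero_of_onT (hα : ∀ j, ‖α j‖ < 1) (m : ℕ) {z : ℂ} (hz : onT z) :
    (piG α c m).eval z ≠ 0 := by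
  rw [piG, eval_prod]
  exact Finset.prod_ne_zero_iff.2 fun j _ => wG_eval_ne_zero_of_onT hα j hz

lemma natDegree_tailProd_le (α : ℕ → ℂ) (c : ℕ → Bool) (M k : ℕ) :
    (tailProd α c M k).natDegree ≤ M - k := by
  refine (natDegree_prod_le _ _).trans ((Finset.sum_le_card_nsmul _ _ 1 fun j _ =>
    natDegree_wG_le α c j).trans ?_)
  simp

/-- `B_m = B̌_m^α B̌_m^β = ∏_{j=1}^m ζ_j`. -/
def blaschke (α : ℕ → ℂ) (c : ℕ → Bool) (m : ℕ) (z : ℂ) : ℂ :=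
  ∏ j ∈ Finset.Icc 1 m, zetaG α c j z

lemma blaschke_succ (m : ℕ) (z : ℂ) :
    blaschke α c (m + 1) z = blaschke α c m z * zetaG α c (m + 1) z :=
  Finset.prod_Icc_succ_top (by omega) _

lemma norm_blaschke_of_onT (hα : ∀ j, ‖α j‖ < 1) (m : ℕ) {z : ℂ} (hz : onT z) :
    ‖blaschke α c m z‖ = 1 := by
  simp [blaschke, norm_prod, norm_zetaG_of_onT hα _ hz]

lemma blaschke_eq_of_onT (m : ℕ) {z : ℂ} (hz : onT z) :
    blaschke α c m z = sigProd α m * z ^ m * conj' ((piG α c m).eval z) / (piG α c m).eval z := by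
  simp only [blaschke, sigProd, piG, zetaG_eq_div, wstarG_eval_of_onT _ hz, eval_prod, conj',
    map_prod, Finset.prod_div_distrib, Finset.prod_mul_distrib, Finset.prod_const, Nat.card_Icc,
    Nat.add_sub_cancel, mul_assoc]

lemma sigProd_mul_pstar_eval_div_of_onT {m : ℕ} {q : ℂ[X]} (hq : q.natDegree ≤ m) {z : ℂ}
    (hz : onT z) :
    sigProd α m * (pstar m q).eval z / (piG α c m).eval z =
      blaschke α c m z * conj' (q.eval z / (piG α c m).eval z) := by
  rw [pstar_eval_of_onT hq hz, blaschke_eq_of_onT m hz]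
  simp only [conj', map_div₀]
  by_cases hπ : (piG α c m).eval z = 0
  · simp [hπ]
  · have : starRingEnd ℂ ((piG α c m).eval z) ≠ 0 := (_root_.map_ne_zero _).2 hπ
    field_simp

lemma IsORF.apply_zero (hφ : IsORF μ (piG α c) φ p) (z : ℂ) : φ 0 z = 1 := by
  simp [hφ.rep, hφ.p0, piG]

lemma IsORF.starF_zero (hφ : IsORF μ (piG α c) φ p) (z : ℂ) : starF α (piG α c) p 0 z = 1 := by
  simp [starF, hφ.p0, sigProd, piG, pstar, conj']

lemma IsORF.starF_eq_of_onT (hφ : IsORF μ (piG α c) φ p) (m : ℕ) {z : ℂ} (hz : onT z) :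
    starF α (piG α c) p m z = blaschke α c m z * conj' (φ m z) := by
  rw [hφ.rep]
  exact sigProd_mul_pstar_eval_div_of_onT (hφ.deg m) hz

/-- The numerator of `φ k` over the common denominator `π_M`. -/
def numer (α : ℕ → ℂ) (c : ℕ → Bool) (p : ℕ → ℂ[X]) (M k : ℕ) : ℂ[X] :=
  p k * tailProd α c M k

lemma natDegree_numer_le (hφ : IsORF μ (piG α c) φ p) {M k : ℕ} (hk : k ≤ M) :
    (numer α c p M k).natDegree ≤ M := by
  have := hφ.deg k
  have := natDegree_tailProd_le α c M k
  exact natDegree_mul_le.trans (by omega)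

lemma IsORF.eq_numer_div (hφ : IsORF μ (piG α c) φ p) {M k : ℕ} (hk : k ≤ M) {z : ℂ}
    (hz : (piG α c M).eval z ≠ 0) : φ k z = (numer α c p M k).eval z / (piG α c M).eval z := by
  rw [piG_eq_mul_tailProd α c hk, eval_mul] at hz ⊢
  rw [numer, eval_mul, mul_div_mul_right _ _ (right_ne_zero_of_mul hz), hφ.rep]

lemma IsORF.mem_Lsp (hα : ∀ j, ‖α j‖ < 1) (hφ : IsORF μ (piG α c) φ p) {M k : ℕ}
    (hk : k ≤ M) : φ k ∈ Lsp (piG α c) M :=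
  ⟨numer α c p M k, natDegree_numer_le hφ hk, fun _ hz =>
    hφ.eq_numer_div hk (piG_eval_ne_zero_of_onT hα M hz)⟩

lemma IsORF.inn_eq_ite (hα : ∀ j, ‖α j‖ < 1) (hφ : IsORF μ (piG α c) φ p) (k l : ℕ) :
    inn μ (φ k) (φ l) = if k = l then 1 else 0 := by
  rcases lt_trichotomy k l with h | rfl | h
  · rw [if_neg h.ne, ← conj_inn, hφ.orth l (by omega) _ (hφ.mem_Lsp hα (by omega)), conj',
      map_zero]
  · rw [if_pos rfl, hφ.norm]
  · rw [if_neg h.ne', hφ.orth k (by omega) _ (hφ.mem_Lsp hα (by omega))]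

lemma IsORF.inn_numer_div (hα : ∀ j, ‖α j‖ < 1) (hμT : μ {z | ¬ onT z} = 0)
    (hφ : IsORF μ (piG α c) φ p) {M k l : ℕ} (hk : k ≤ M) (hl : l ≤ M) :
    inn μ (fun z => (numer α c p M k).eval z / (piG α c M).eval z)
      (fun z => (numer α c p M l).eval z / (piG α c M).eval z) = if k = l then 1 else 0 := by
  rw [← hφ.inn_eq_ite hα k l]
  exact inn_congr_fun_of_onT hμT
    (fun z hz => (hφ.eq_numer_div hk (piG_eval_ne_zero_of_onT hα M hz)).symm)
    (fun z hz => (hφ.eq_numer_div hl (piG_eval_ne_zero_of_onT hα M hz)).symm)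

lemma IsORF.inn_starF_self (hα : ∀ j, ‖α j‖ < 1) (hμT : μ {z | ¬ onT z} = 0)
    (hφ : IsORF μ (piG α c) φ p) (m : ℕ) :
    inn μ (starF α (piG α c) p m) (starF α (piG α c) p m) = 1 := by
  rw [← hφ.norm m]
  refine inn_congr_of_onT hμT fun z hz => ?_
  have hB := conj_mul_self_of_norm_eq_one (norm_blaschke_of_onT (c := c) hα m hz)
  rw [hφ.starF_eq_of_onT m hz]
  simp only [conj', map_mul, Complex.conj_conj] at hB ⊢
  linear_combination (φ m z * starRingEnd ℂ (φ m z)) * hB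

lemma IsORF.inn_zetaG_mul (hα : ∀ j, ‖α j‖ < 1) (hμT : μ {z | ¬ onT z} = 0)
    (hφ : IsORF μ (piG α c) φ p) (j k l : ℕ) :
    inn μ (fun z => zetaG α c j z * φ k z) (fun z => zetaG α c j z * φ l z) =
      if k = l then 1 else 0 := by
  rw [← hφ.inn_eq_ite hα k l]
  refine inn_congr_of_onT hμT fun z hz => ?_
  have hζ := conj_mul_self_of_norm_eq_one (norm_zetaG_of_onT (c := c) hα j hz)
  simp only [conj', map_mul] at hζ ⊢
  linear_combination (starRingEnd ℂ (φ k z) * φ l z) * hζ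

/-- `ζ_{n+1} φ_k ⊥ φ*_{n+1}` because `φ*_{n+1} / ζ_{n+1} = B_n (φ_{n+1})_*` on `𝕋`, while
`B_n (φ_k)_*` lies in `L_n`, which is orthogonal to `φ_{n+1}`. -/
lemma IsORF.inn_starF_zetaG_mul (hα : ∀ j, ‖α j‖ < 1) (hμT : μ {z | ¬ onT z} = 0)
    (hφ : IsORF μ (piG α c) φ p) {n k : ℕ} (hk : k ≤ n) :
    inn μ (starF α (piG α c) p (n + 1)) (fun z => zetaG α c (n + 1) z * φ k z) = 0 := by
  set g : ℂ → ℂ := fun z =>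
    sigProd α n * (pstar n (numer α c p n k)).eval z / (piG α c n).eval z
  have hg : g ∈ Lsp (piG α c) (n + 1 - 1) :=
    ⟨C (sigProd α n) * pstar n (numer α c p n k),
      (natDegree_C_mul_le _ _).trans (natDegree_pstar_le _ _), fun z _ => by simp [g]⟩
  have hswap : inn μ (starF α (piG α c) p (n + 1)) (fun z => zetaG α c (n + 1) z * φ k z) =
      inn μ g (φ (n + 1)) := by
    refine inn_congr_of_onT hμT fun z hz => ?_
    have hζ := conj_mul_self_of_norm_eq_one (norm_zetaG_of_onT (c := c) hα (n + 1) hz)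
    dsimp only [g]
    rw [hφ.starF_eq_of_onT _ hz, blaschke_succ,
      sigProd_mul_pstar_eval_div_of_onT (natDegree_numer_le hφ hk) hz,
      ← hφ.eq_numer_div hk (piG_eval_ne_zero_of_onT hα n hz)]
    simp only [conj', map_mul, Complex.conj_conj] at hζ ⊢
    linear_combination (starRingEnd ℂ (blaschke α c n z) * φ (n + 1) z * φ k z) * hζ
  rw [hswap, ← conj_inn, hφ.orth (n + 1) (Nat.succ_pos n) g hg, conj', map_zero]

/-- The numerators over `π_{n+1}` of the orthonormal basis `φ*_{n+1}, ζ_{n+1} φ_0, …, ζ_{n+1} φ_n`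
of `L_{n+1}`. -/
def cdNumer (α : ℕ → ℂ) (c : ℕ → Bool) (p : ℕ → ℂ[X]) (n : ℕ) : Option (Fin (n + 1)) → ℂ[X]
  | none => C (sigProd α (n + 1)) * pstar (n + 1) (p (n + 1))
  | some k => C (sig α (n + 1)) * wstarG α c (n + 1) * numer α c p n k

lemma natDegree_cdNumer_le (hφ : IsORF μ (piG α c) φ p) (n : ℕ) (i : Option (Fin (n + 1))) :
    (cdNumer α c p n i).natDegree ≤ n + 1 := by
  rcases i with _ | k
  · exact (natDegree_C_mul_le _ _).trans (natDegree_pstar_le _ _)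
  · have := natDegree_wstarG_le α c (n + 1)
    have := natDegree_numer_le hφ k.is_le
    refine natDegree_mul_le.trans ?_
    grw [natDegree_C_mul_le]
    omega

lemma cdNumer_none_eval_div (n : ℕ) (z : ℂ) :
    (cdNumer α c p n none).eval z / (piG α c (n + 1)).eval z = starF α (piG α c) p (n + 1) z := by
  rw [cdNumer, eval_mul, eval_C, starF]

lemma IsORF.cdNumer_some_eval_div (hφ : IsORF μ (piG α c) φ p) {n : ℕ} (k : Fin (n + 1)) {z : ℂ}
    (hz : (piG α c (n + 1)).eval z ≠ 0) :
    (cdNumer α c p n (some k)).eval z / (piG α c (n + 1)).eval z = zetaG α c (n + 1) z * φ k z := by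
  rw [piG_succ, eval_mul] at hz ⊢
  rw [hφ.eq_numer_div k.is_le (left_ne_zero_of_mul hz), zetaG_eq_div, cdNumer]
  simp only [eval_mul, eval_C]
  ring

lemma IsORF.inn_cdNumer_div (hα : ∀ j, ‖α j‖ < 1) (hμT : μ {z | ¬ onT z} = 0)
    (hφ : IsORF μ (piG α c) φ p) (n : ℕ) (i j : Option (Fin (n + 1))) :
    inn μ (fun z => (cdNumer α c p n i).eval z / (piG α c (n + 1)).eval z)
      (fun z => (cdNumer α c p n j).eval z / (piG α c (n + 1)).eval z) =
      if i = j then 1 else 0 := by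
  have hnone : ∀ z, onT z → (cdNumer α c p n none).eval z / (piG α c (n + 1)).eval z =
      starF α (piG α c) p (n + 1) z := fun z _ => cdNumer_none_eval_div n z
  have hsome (k : Fin (n + 1)) : ∀ z, onT z →
      (cdNumer α c p n (some k)).eval z / (piG α c (n + 1)).eval z = zetaG α c (n + 1) z * φ k z :=
    fun z hz => hφ.cdNumer_some_eval_div k (piG_eval_ne_zero_of_onT hα (n + 1) hz)
  rcases i with _ | k <;> rcases j with _ | l
  · rw [inn_congr_fun_of_onT hμT hnone hnone, hφ.inn_starF_self hα hμT, if_pos rfl]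
  · rw [inn_congr_fun_of_onT hμT hnone (hsome l), hφ.inn_starF_zetaG_mul hα hμT l.is_le]
    simp
  · rw [← conj_inn, inn_congr_fun_of_onT hμT hnone (hsome k),
      hφ.inn_starF_zetaG_mul hα hμT k.is_le, conj', map_zero]
    simp
  · rw [inn_congr_fun_of_onT hμT (hsome k) (hsome l), hφ.inn_zetaG_mul hα hμT]
    simp [Fin.val_inj]

lemma ker_succ (φ : ℕ → ℂ → ℂ) (n : ℕ) (z w : ℂ) :
    ker φ (n + 1) z w = ker φ n z w + φ (n + 1) z * conj' (φ (n + 1) w) :=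
  Finset.sum_range_succ _ _

lemma IsORF.ker_eq_sum_numer_div (hφ : IsORF μ (piG α c) φ p) {M : ℕ} {z w : ℂ}
    (hz : (piG α c M).eval z ≠ 0) (hw : (piG α c M).eval w ≠ 0) :
    ker φ M z w = (∑ k : Fin (M + 1), (numer α c p M k).eval z * conj' ((numer α c p M k).eval w)) /
      ((piG α c M).eval z * conj' ((piG α c M).eval w)) := by
  rw [Finset.sum_div, ker, ← Fin.sum_univ_eq_sum_range]
  refine Finset.sum_congr rfl fun k _ => ?_
  rw [mul_conj_div_mul_conj, ← hφ.eq_numer_div k.is_le hz, ← hφ.eq_numer_div k.is_le hw]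

lemma IsORF.sum_cdNumer_div (hφ : IsORF μ (piG α c) φ p) {n : ℕ} {z w : ℂ}
    (hz : (piG α c (n + 1)).eval z ≠ 0) (hw : (piG α c (n + 1)).eval w ≠ 0) :
    (∑ i, (cdNumer α c p n i).eval z * conj' ((cdNumer α c p n i).eval w)) /
        ((piG α c (n + 1)).eval z * conj' ((piG α c (n + 1)).eval w)) =
      starF α (piG α c) p (n + 1) z * conj' (starF α (piG α c) p (n + 1) w) +
        zetaG α c (n + 1) z * conj' (zetaG α c (n + 1) w) * ker φ n z w := by
  rw [Finset.sum_div, Fintype.sum_option, mul_conj_div_mul_conj, cdNumer_none_eval_div,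
    cdNumer_none_eval_div, ker, ← Fin.sum_univ_eq_sum_range, Finset.mul_sum]
  congr 1
  refine Finset.sum_congr rfl fun k _ => ?_
  rw [mul_conj_div_mul_conj, hφ.cdNumer_some_eval_div k hz, hφ.cdNumer_some_eval_div k hw]
  simp only [conj', map_mul]
  ring

lemma IsORF.ker_succ_eq [IsFiniteMeasure μ] (hα : ∀ j, ‖α j‖ < 1) (hμT : μ {z | ¬ onT z} = 0)
    (hφ : IsORF μ (piG α c) φ p) (n : ℕ) {z w : ℂ}
    (hz : (piG α c (n + 1)).eval z ≠ 0) (hw : (piG α c (n + 1)).eval w ≠ 0) :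
    ker φ (n + 1) z w = starF α (piG α c) p (n + 1) z * conj' (starF α (piG α c) p (n + 1) w) +
      zetaG α c (n + 1) z * conj' (zetaG α c (n + 1) w) * ker φ n z w := by
  let B := gramForm μ hμT (piG α c (n + 1)) fun x hx => piG_eval_ne_zero_of_onT hα (n + 1) hx
  have hu (k l : Fin (n + 2)) :
      B (numer α c p (n + 1) k) (numer α c p (n + 1) l) = if k = l then 1 else 0 :=
    (hφ.inn_numer_div hα hμT k.is_le l.is_le).trans (by simp [Fin.val_inj])
  have hsum := sum_eval_mul_conj_eq_of_orthonormal B hu (hφ.inn_cdNumer_div hα hμT n)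
    (fun k => natDegree_numer_le hφ k.is_le) (natDegree_cdNumer_le hφ n) (Fintype.card_fin _)
    (by simp) z w
  rw [hφ.ker_eq_sum_numer_div hz hw, ← hφ.sum_cdNumer_div hz hw]
  exact congrArg (· / _) hsum.symm

end ORF

open ORF MeasureTheory

/-- The case `ν = α` is `c ≡ true`, the case `ν = β` is `c ≡ false`. -/
theorem stmt7_general (α : ℕ → ℂ) (hα : ∀ j, ‖α j‖ < 1)
    (c : ℕ → Bool) (μ : Measure ℂ) (hμ : CircleMeasure μ)
    (φ : ℕ → ℂ → ℂ) (p : ℕ → Polynomial ℂ)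
    (hφ : IsORF μ (piG α c) φ p)
    (n : ℕ) (z w : ℂ)
    (hpz : (piG α c (n + 1)).eval z ≠ 0) (hpw : (piG α c (n + 1)).eval w ≠ 0)
    (hd1 : 1 - zetaG α c n z * conj' (zetaG α c n w) ≠ 0)
    (hd2 : 1 - zetaG α c (n + 1) z * conj' (zetaG α c (n + 1) w) ≠ 0) :
    ker φ n z w =
      (starF α (piG α c) p n z * conj' (starF α (piG α c) p n w) -
        zetaG α c n z * conj' (zetaG α c n w) * (φ n z * conj' (φ n w))) /
      (1 - zetaG α c n z * conj' (zetaG α c n w)) ∧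
    ker φ n z w =
      (starF α (piG α c) p (n + 1) z * conj' (starF α (piG α c) p (n + 1) w) -
        φ (n + 1) z * conj' (φ (n + 1) w)) /
      (1 - zetaG α c (n + 1) z * conj' (zetaG α c (n + 1) w)) := by
  have := hμ.prob
  refine ⟨?_, ?_⟩
  · rw [eq_div_iff hd1]
    cases n with
    | zero => simp [ker, hφ.apply_zero, hφ.starF_zero, conj']
    | succ m =>
      have hrec := hφ.ker_succ_eq hα hμ.circ m (piG_eval_ne_zero_of_succ hpz)
        (piG_eval_ne_zero_of_succ hpw)
      linear_combination hrec - zetaG α c (m + 1) z * conj' (zetaG α c (m + 1) w) * ker_succ φ m z w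
  · rw [eq_div_iff hd2]
    linear_combination hφ.ker_succ_eq hα hμ.circ n hpz hpw - ker_succ φ n z w

/-- Christoffel–Darboux relations: for every n ≥ 0 and z, w off the unit
circle, not among the poles of φ_n^ν, φ_{n+1}^ν, and with nonvanishing denominators,
k_n^ν(z,w) = [φ_n^{ν*}(z)conj(φ_n^{ν*}(w)) − ζ_n^ν(z)conj(ζ_n^ν(w))φ_n^ν(z)conj(φ_n^ν(w))]
             /(1 − ζ_n^ν(z)conj(ζ_n^ν(w)))
           = [φ_{n+1}^{ν*}(z)conj(φ_{n+1}^{ν*}(w)) − φ_{n+1}^ν(z)conj(φ_{n+1}^ν(w))]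
             /(1 − ζ_{n+1}^ν(z)conj(ζ_{n+1}^ν(w))).
Here the sequence γ (encoded by `c`) is arbitrary, so that the three cases
ν = α (c ≡ true), ν = β (c ≡ false) and ν = γ are all covered. -/
theorem stmt7 (α : ℕ → ℂ) (hα0 : α 0 = 0) (hα : ∀ j, ‖α j‖ < 1)
    (c : ℕ → Bool) (μ : Measure ℂ) (hμ : CircleMeasure μ)
    (φ : ℕ → ℂ → ℂ) (p : ℕ → Polynomial ℂ)
    (hφ : IsORF μ (piG α c) φ p) (hnφ : ∀ n, normG α c p n)
    (n : ℕ) (z w : ℂ)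
    (hz : ¬ onT z) (hw : ¬ onT w)
    (hpz : (piG α c (n + 1)).eval z ≠ 0) (hpw : (piG α c (n + 1)).eval w ≠ 0)
    (hd1 : 1 - zetaG α c n z * conj' (zetaG α c n w) ≠ 0)
    (hd2 : 1 - zetaG α c (n + 1) z * conj' (zetaG α c (n + 1) w) ≠ 0) :
    ker φ n z w =
      (starF α (piG α c) p n z * conj' (starF α (piG α c) p n w) -
        zetaG α c n z * conj' (zetaG α c n w) * (φ n z * conj' (φ n w))) /
      (1 - zetaG α c n z * conj' (zetaG α c n w)) ∧
    ker φ n z w =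
      (starF α (piG α c) p (n + 1) z * conj' (starF α (piG α c) p (n + 1) w) -
        φ (n + 1) z * conj' (φ (n + 1) w)) /
      (1 - zetaG α c (n + 1) z * conj' (zetaG α c (n + 1) w)) :=
  stmt7_general α hα c μ hμ φ p hφ n z w hpz hpw hd1 hd2
end
end
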